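/- arXiv:2604.11980 — 4 statements merged into one kernel-verified Lean document; each statement's English description precedes it below -/
import Mathlib

section
/- Let (X,𝔙) be an iterated function system with the small-boundary property. Then mdim(X,𝔙) = 0. -/
open Filter Topology Set
open scoped ENat ENNReal

/-- A member map of a generalized iterated function system: a homeomorphism
`v : D(v) → v(D(v))` with closed domain `D(v) ⊆ X`. (On a compact metric space,
a continuous injective map on a closed domain is automatically a homeomorphism
onto its image.) -/
structure IFSMap (X : Type*) [MetricSpace X] where
  dom : Set X
  toFun : X → X
  closed_dom : IsClosed dom
  injOn : Set.InjOn toFun dom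
  contOn : ContinuousOn toFun dom

namespace IFS

variable {X : Type*} [MetricSpace X]

/-- `(X, 𝔙)` is an iterated function system: there is `O ⊆ X` with
`∅ ≠ ⋃_{v∈𝔙} v(D(v)∩O) ⊆ ⋃_{v∈𝔙} (D(v)∩O)`. -/
def IsIFS (𝔙 : Set (IFSMap X)) : Prop :=
  ∃ O : Set X, (⋃ v ∈ 𝔙, v.toFun '' (v.dom ∩ O)).Nonempty ∧
    (⋃ v ∈ 𝔙, v.toFun '' (v.dom ∩ O)) ⊆ ⋃ v ∈ 𝔙, (v.dom ∩ O)

/-- `orbitIter σ x n = v^{σ(n)}(x) = v_n ∘ ⋯ ∘ v_1 (x)` (here `σ 0 = v_1`). -/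
def orbitIter (σ : ℕ → IFSMap X) (x : X) : ℕ → X
  | 0 => x
  | n + 1 => (σ n).toFun (orbitIter σ x n)

/-- `σ ∈ Σ_x` and `x ∈ Σ_σ` : `v^{σ(n)}(x)` is well defined for all `n`. -/
def WellDef (σ : ℕ → IFSMap X) (x : X) : Prop := ∀ n : ℕ, orbitIter σ x n ∈ (σ n).dom

/-- `σ ∈ Σ`, i.e. `σ` is a sequence of members of `𝔙`. -/
def SeqIn (𝔙 : Set (IFSMap X)) (σ : ℕ → IFSMap X) : Prop := ∀ n : ℕ, σ n ∈ 𝔙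

/-- `Σ_σ = {x ∈ X : v^{σ(n)}(x) is well defined for all n}`. -/
def SigmaSet (σ : ℕ → IFSMap X) : Set X := {x | WellDef σ x}

/-! ### Spanning sets, entropy and metric mean dimension -/

/-- `R` is an `(n,ε)`-spanning subset of `Ψ(X)`. -/
def IsSpanning (𝔙 : Set (IFSMap X)) (n : ℕ) (ε : ℝ) (R : Set (X × (ℕ → IFSMap X))) : Prop :=
  (∀ p ∈ R, SeqIn 𝔙 p.2 ∧ WellDef p.2 p.1) ∧
  ∀ (x : X) (σ : ℕ → IFSMap X), SeqIn 𝔙 σ → WellDef σ x →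
    ∃ p ∈ R, ∀ i < n, dist (orbitIter σ x i) (orbitIter p.2 p.1 i) < ε

/-- `r(n,ε)`: minimal cardinality of an `(n,ε)`-spanning set. -/
noncomputable def spanNum (𝔙 : Set (IFSMap X)) (n : ℕ) (ε : ℝ) : ℝ≥0∞ :=
  ⨅ (R : Set (X × (ℕ → IFSMap X))) (_ : IsSpanning 𝔙 n ε R), (R.encard : ℝ≥0∞)

/-- `limsup_{n→∞} (1/n) log r(n,ε)`. -/
noncomputable def entropyRate (𝔙 : Set (IFSMap X)) (ε : ℝ) : EReal :=
  limsup (fun n : ℕ => (((n : ℝ)⁻¹ : ℝ) : EReal) * ENNReal.log (spanNum 𝔙 n ε)) atTop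

/-- Topological entropy `h(X,𝔙) = lim_{ε→0} limsup_{n→∞} (1/n) log r(n,ε)`; since the
inner quantity is antitone in `ε`, the limit is the supremum over `ε > 0`. -/
noncomputable def entropy (𝔙 : Set (IFSMap X)) : EReal :=
  ⨆ (ε : ℝ) (_ : 0 < ε), entropyRate 𝔙 ε

/-- Upper metric mean dimension. -/
noncomputable def umdim (𝔙 : Set (IFSMap X)) : EReal :=
  limsup (fun ε : ℝ => ((|Real.log ε|⁻¹ : ℝ) : EReal) * entropyRate 𝔙 ε) (𝓝[>] (0 : ℝ))

/-- Lower metric mean dimension. -/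
noncomputable def lmdim (𝔙 : Set (IFSMap X)) : EReal :=
  liminf (fun ε : ℝ => ((|Real.log ε|⁻¹ : ℝ) : EReal) * entropyRate 𝔙 ε) (𝓝[>] (0 : ℝ))

/-! ### Separated sets and orbit metric mean dimension -/

/-- `S` is `(σ,n,ε)`-separated. -/
def IsSeparatedAlong (σ : ℕ → IFSMap X) (n : ℕ) (ε : ℝ) (S : Set X) : Prop :=
  (∀ x ∈ S, WellDef σ x) ∧
  ∀ x ∈ S, ∀ y ∈ S, x ≠ y → ∃ i < n, ε ≤ dist (orbitIter σ x i) (orbitIter σ y i)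

/-- `s(σ,n,ε)`: maximal cardinality of a `(σ,n,ε)`-separated set. -/
noncomputable def sepNum (σ : ℕ → IFSMap X) (n : ℕ) (ε : ℝ) : ℝ≥0∞ :=
  ⨆ (S : Set X) (_ : IsSeparatedAlong σ n ε S), (S.encard : ℝ≥0∞)

/-- Orbit metric mean dimension of `(X,𝔙)` along `σ`. -/
noncomputable def omdimAlong (σ : ℕ → IFSMap X) : EReal :=
  liminf (fun ε : ℝ => ((|Real.log ε|⁻¹ : ℝ) : EReal) *
    limsup (fun n : ℕ => (((n : ℝ)⁻¹ : ℝ) : EReal) * ENNReal.log (sepNum σ n ε)) atTop)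
    (𝓝[>] (0 : ℝ))

/-- Orbit metric mean dimension of `(X,𝔙)`. -/
noncomputable def omdim (𝔙 : Set (IFSMap X)) : EReal :=
  ⨆ (σ : ℕ → IFSMap X) (_ : SeqIn 𝔙 σ), omdimAlong σ

/-! ### Finite open covers and mean dimension -/

/-- `α` is a finite open cover of `A` (elements open relative to `A`). -/
def IsOpenCoverOn (A : Set X) (α : Set (Set X)) : Prop :=
  α.Finite ∧ (∀ U ∈ α, ∃ V : Set X, IsOpen V ∧ U ∩ A = V ∩ A) ∧ A ⊆ ⋃₀ α

/-- `β` refines `α`. -/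
def Refines (β α : Set (Set X)) : Prop := ∀ U ∈ β, ∃ V ∈ α, U ⊆ V

/-- `ord(α,A) = max_{x∈A} Σ_{U∈α} 1_U(x) − 1`. -/
noncomputable def ordOn (A : Set X) (α : Set (Set X)) : ℕ∞ :=
  (⨆ x ∈ A, {U ∈ α | x ∈ U}.encard) - 1

/-- `𝒟(α) = min_{β ≻ α} ord(β,A)` over finite open covers `β` of `A` refining `α`. -/
noncomputable def coverD (A : Set X) (α : Set (Set X)) : ℕ∞ :=
  ⨅ (β : Set (Set X)) (_ : IsOpenCoverOn A β ∧ Refines β α), ordOn A β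

/-- `v^{σ(n)}` is defined at `x` (all steps up to `n` stay in the domains). -/
def DefinedUpTo (σ : ℕ → IFSMap X) (n : ℕ) (x : X) : Prop :=
  ∀ k < n, orbitIter σ x k ∈ (σ k).dom

/-- `v^{-σ(n)}(U) = v_1^{-1}∘⋯∘v_n^{-1}(U)` as a preimage under the partial map. -/
def preimageN (σ : ℕ → IFSMap X) (n : ℕ) (U : Set X) : Set X :=
  {x | DefinedUpTo σ n x ∧ orbitIter σ x n ∈ U}

/-- Join `α ∨ β` of two covers. -/
def coverJoin (α β : Set (Set X)) : Set (Set X) := Set.image2 (· ∩ ·) α β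

/-- `v^{-σ(n)}α`. -/
def coverPull (σ : ℕ → IFSMap X) (n : ℕ) (α : Set (Set X)) : Set (Set X) :=
  preimageN σ n '' α

/-- `coverUpTo σ α n = α_0^n(σ) = v^{-σ(0)}α ∨ ⋯ ∨ v^{-σ(n)}α`. -/
def coverUpTo (σ : ℕ → IFSMap X) (α : Set (Set X)) : ℕ → Set (Set X)
  | 0 => coverPull σ 0 α
  | n + 1 => coverJoin (coverUpTo σ α n) (coverPull σ (n + 1) α)

/-- `lim_{n→∞} 𝒟(α_0^{n-1}(σ))/n` (as an upper limit), the covers being considered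
relative to `Σ_σ`. -/
noncomputable def mdimCover (σ : ℕ → IFSMap X) (α : Set (Set X)) : ℝ≥0∞ :=
  limsup (fun n : ℕ =>
    ((coverD (SigmaSet σ) (coverUpTo σ α n) : ℝ≥0∞)) / ((n : ℝ≥0∞) + 1)) atTop

/-- Mean dimension of `(X,𝔙)` along `σ`. -/
noncomputable def mdimAlong (σ : ℕ → IFSMap X) : ℝ≥0∞ :=
  ⨆ (α : Set (Set X)) (_ : IsOpenCoverOn (Set.univ : Set X) α), mdimCover σ α

/-- Mean dimension of `(X,𝔙)`. -/
noncomputable def mdim (𝔙 : Set (IFSMap X)) : ℝ≥0∞ :=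
  ⨆ (σ : ℕ → IFSMap X) (_ : SeqIn 𝔙 σ), mdimAlong σ

/-! ### Orbit capacity and the small boundary property -/

/-- `cap(n,x,A) = sup_{σ∈Σ_x} (1/n) Σ_{i=0}^{n-1} 1_A(v^{σ(i)}(x))`. -/
noncomputable def capa (𝔙 : Set (IFSMap X)) (n : ℕ) (x : X) (A : Set X) : ℝ≥0∞ :=
  ⨆ (σ : ℕ → IFSMap X) (_ : SeqIn 𝔙 σ ∧ WellDef σ x),
    ({i : ℕ | i < n ∧ orbitIter σ x i ∈ A}.encard : ℝ≥0∞) / (n : ℝ≥0∞)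

/-- Orbit capacity `ocap(A) = lim_{n→∞} sup_{x∈X} cap(n,x,A)`. -/
noncomputable def ocap (𝔙 : Set (IFSMap X)) (A : Set X) : ℝ≥0∞ :=
  limsup (fun n : ℕ => ⨆ x : X, capa 𝔙 n x A) atTop

/-- The small boundary property. -/
def SmallBoundary (𝔙 : Set (IFSMap X)) : Prop :=
  ∀ x : X, ∀ U : Set X, IsOpen U → x ∈ U →
    ∃ V : Set X, IsOpen V ∧ x ∈ V ∧ V ⊆ U ∧ ocap 𝔙 (frontier V) = 0

/-! ### Gluing orbit property, transitivity, rigidity -/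

/-- `gapStart m t j = s_{j+1} = Σ_{i≤j-1} (m_i + t_i − 1)` (0-indexed). -/
def gapStart (m t : ℕ → ℕ) : ℕ → ℕ
  | 0 => 0
  | j + 1 => gapStart m t j + m j + t j - 1

/-- The Gluing Orbit Property: every orbit sequence (of length `N ∈ ℕ∞`, with
segment lengths `m j ∈ ℕ∞`, infinite only allowed for the last segment of a finite
sequence) can be `ε`-traced with gaps bounded by `M = M(ε)`. -/
def GluingOrbit (𝔙 : Set (IFSMap X)) : Prop :=
  ∀ ε : ℝ, 0 < ε → ∃ M : ℕ, 0 < M ∧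
    ∀ (N : ℕ∞) (x : ℕ → X) (σs : ℕ → ℕ → IFSMap X) (m : ℕ → ℕ∞),
      0 < N →
      (∀ j : ℕ, (j : ℕ∞) < N → SeqIn 𝔙 (σs j) ∧ WellDef (σs j) (x j)) →
      (∀ j : ℕ, (j : ℕ∞) < N → 1 ≤ m j) →
      (∀ j : ℕ, (j : ℕ∞) < N → m j = ⊤ → (j : ℕ∞) + 1 = N) →
      ∃ (t : ℕ → ℕ) (z : X) (φ : ℕ → IFSMap X),
        (∀ j : ℕ, 1 ≤ t j ∧ t j ≤ M) ∧ SeqIn 𝔙 φ ∧ WellDef φ z ∧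
        ∀ j : ℕ, (j : ℕ∞) < N → ∀ l : ℕ, (l : ℕ∞) < m j →
          dist (orbitIter φ z (gapStart (fun i => (m i).toNat) t j + l))
               (orbitIter (σs j) (x j) l) < ε

/-- `Tran(X,𝔙,σ)`: points `p` with `σ ∈ Σ_p` whose `σ`-orbit `{v^{σ(n)}(p) : n ≥ 1}`
is dense in `X`. -/
def Tran (σ : ℕ → IFSMap X) : Set X :=
  {p | WellDef σ p ∧ Dense (Set.range fun n : ℕ => orbitIter σ p (n + 1))}

/-- `σ` is uniformly rigid: `v^{σ(m_k)} → Id` uniformly on `Σ_σ` for some sequence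
`m_k` of natural numbers (`≥ 1`). -/
def UniformlyRigid (σ : ℕ → IFSMap X) : Prop :=
  ∃ m : ℕ → ℕ, (∀ k, 1 ≤ m k) ∧
    TendstoUniformlyOn (fun (k : ℕ) (x : X) => orbitIter σ x (m k)) id atTop (SigmaSet σ)

end IFS

-- ============ auxiliary development ============
namespace IFSAux
open IFS

variable {X : Type*} [MetricSpace X]

/-- the set where the first `k` steps are defined -/
def defSet (σ : ℕ → IFSMap X) (k : ℕ) : Set X := {x | DefinedUpTo σ k x}

lemma defSet_zero (σ : ℕ → IFSMap X) : defSet σ 0 = univ := by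
  ext x; simp [defSet, DefinedUpTo]

lemma defSet_succ (σ : ℕ → IFSMap X) (k : ℕ) :
    defSet σ (k + 1) = defSet σ k ∩ {x | orbitIter σ x k ∈ (σ k).dom} := by
  ext x
  simp only [defSet, DefinedUpTo, mem_setOf_eq, mem_inter_iff]
  constructor
  · intro h; exact ⟨fun j hj => h j (by omega), h k (by omega)⟩
  · rintro ⟨h1, h2⟩ j hj
    rcases Nat.lt_succ_iff_lt_or_eq.1 hj with h | rfl
    · exact h1 j h
    · exact h2

lemma isClosed_defSet_and_contOn (σ : ℕ → IFSMap X) (k : ℕ) :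
    IsClosed (defSet σ k) ∧ ContinuousOn (fun x => orbitIter σ x k) (defSet σ k) := by
  induction k with
  | zero =>
    refine ⟨by rw [defSet_zero]; exact isClosed_univ, ?_⟩
    exact continuousOn_id (s := defSet σ 0)
  | succ k ih =>
    obtain ⟨hcl, hct⟩ := ih
    have hcl' : IsClosed (defSet σ (k + 1)) := by
      rw [defSet_succ]
      exact hct.preimage_isClosed_of_isClosed hcl (σ k).closed_dom
    refine ⟨hcl', ?_⟩
    have hsub : defSet σ (k + 1) ⊆ defSet σ k := by
      rw [defSet_succ]; exact inter_subset_left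
    have hmaps : MapsTo (fun x => orbitIter σ x k) (defSet σ (k + 1)) (σ k).dom := by
      intro x hx
      exact hx k (by omega)
    have : ContinuousOn (fun x => (σ k).toFun (orbitIter σ x k)) (defSet σ (k + 1)) :=
      (σ k).contOn.comp (hct.mono hsub) hmaps
    simpa [orbitIter] using this

lemma sigmaSet_subset_defSet (σ : ℕ → IFSMap X) (k : ℕ) : SigmaSet σ ⊆ defSet σ k := by
  intro x hx j _
  exact hx j

lemma sigmaSet_eq_iInter (σ : ℕ → IFSMap X) : SigmaSet σ = ⋂ k, defSet σ k := by
  ext x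
  simp only [mem_iInter]
  constructor
  · intro hx k; exact sigmaSet_subset_defSet σ k hx
  · intro h n
    exact h (n + 1) n (by omega)

lemma isClosed_sigmaSet (σ : ℕ → IFSMap X) : IsClosed (SigmaSet σ) := by
  rw [sigmaSet_eq_iInter]
  exact isClosed_iInter fun k => (isClosed_defSet_and_contOn σ k).1

lemma contOn_orbit_sigmaSet (σ : ℕ → IFSMap X) (k : ℕ) :
    ContinuousOn (fun x => orbitIter σ x k) (SigmaSet σ) :=
  ((isClosed_defSet_and_contOn σ k).2).mono (sigmaSet_subset_defSet σ k)

/-- iterated intersection of pulled-back covers -/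
def interUpTo (σ : ℕ → IFSMap X) (U : ℕ → Set X) : ℕ → Set X
  | 0 => preimageN σ 0 (U 0)
  | n + 1 => interUpTo σ U n ∩ preimageN σ (n + 1) (U (n + 1))

lemma interUpTo_mem_coverUpTo (σ : ℕ → IFSMap X) {α : Set (Set X)} {U : ℕ → Set X}
    (hU : ∀ k, U k ∈ α) (n : ℕ) : interUpTo σ U n ∈ coverUpTo σ α n := by
  induction n with
  | zero => exact ⟨U 0, hU 0, rfl⟩
  | succ n ih =>
    exact mem_image2_of_mem ih ⟨U (n + 1), hU (n + 1), rfl⟩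

lemma mem_interUpTo (σ : ℕ → IFSMap X) (U : ℕ → Set X) (n : ℕ) (x : X)
    (h : ∀ k ≤ n, DefinedUpTo σ k x ∧ orbitIter σ x k ∈ U k) : x ∈ interUpTo σ U n := by
  induction n with
  | zero => exact h 0 le_rfl
  | succ n ih =>
    exact ⟨ih fun k hk => h k (by omega), h (n + 1) le_rfl⟩


section Counting
variable (σ : ℕ → IFSMap X)

open Classical in
/-- number of visits of the orbit to `F` among times `0,…,n-1` -/
noncomputable def cnt (F : Set X) (n : ℕ) (x : X) : ℕ :=
  ((Finset.range n).filter (fun i => orbitIter σ x i ∈ F)).card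

lemma encard_eq_cnt (F : Set X) (n : ℕ) (x : X) :
    ({i : ℕ | i < n ∧ orbitIter σ x i ∈ F}).encard = (cnt σ F n x : ℕ∞) := by
  classical
  have : {i : ℕ | i < n ∧ orbitIter σ x i ∈ F}
      = ↑((Finset.range n).filter (fun i => orbitIter σ x i ∈ F)) := by
    ext i; simp [Finset.mem_filter, Finset.mem_range]
  rw [this, Set.encard_coe_eq_coe_finsetCard, cnt]

lemma cnt_mono {F G : Set X} (h : F ⊆ G) (n : ℕ) (x : X) : cnt σ F n x ≤ cnt σ G n x := by
  classical
  exact Finset.card_le_card (Finset.monotone_filter_right _ (by intro i _ hi; exact h hi))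

lemma cnt_ge_iff (F : Set X) (n c : ℕ) (x : X) :
    c + 1 ≤ cnt σ F n x ↔
      ∃ I ∈ (Finset.range n).powersetCard (c + 1), ∀ i ∈ I, orbitIter σ x i ∈ F := by
  classical
  constructor
  · intro h
    obtain ⟨I, hIsub, hIcard⟩ := Finset.exists_subset_card_eq h
    refine ⟨I, ?_, ?_⟩
    · rw [Finset.mem_powersetCard]
      exact ⟨hIsub.trans (Finset.filter_subset _ _), hIcard⟩
    · intro i hi
      exact (Finset.mem_filter.1 (hIsub hi)).2
  · rintro ⟨I, hI, hIF⟩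
    rw [Finset.mem_powersetCard] at hI
    calc c + 1 = I.card := hI.2.symm
    _ ≤ _ := Finset.card_le_card (by
        intro i hi
        exact Finset.mem_filter.2 ⟨hI.1 hi, hIF i hi⟩)

variable [CompactSpace X]

lemma exists_thickening_cnt_le {E : Set X} (hE : IsClosed E) (n c : ℕ)
    (h : ∀ x ∈ SigmaSet σ, cnt σ E n x ≤ c) :
    ∃ δ : ℝ, 0 < δ ∧ ∀ x ∈ SigmaSet σ, cnt σ (Metric.cthickening δ E) n x ≤ c := by
  classical
  set pc := (Finset.range n).powersetCard (c + 1) with hpc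
  -- the bad sets
  set K : ℕ → Set X := fun k =>
    ⋃ I ∈ pc, ⋂ i ∈ I, (SigmaSet σ ∩ (fun x => orbitIter σ x i) ⁻¹'
      (Metric.cthickening (1 / (k + 1)) E)) with hK
  have hmemK : ∀ k x, x ∈ K k ↔
      ∃ I ∈ pc, ∀ i ∈ I, x ∈ SigmaSet σ ∧
        orbitIter σ x i ∈ Metric.cthickening (1 / (k + 1)) E := by
    intro k x
    simp only [hK, mem_iUnion, mem_iInter, mem_inter_iff, mem_preimage, exists_prop]
  have hKsub : ∀ k, K k ⊆ SigmaSet σ := by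
    intro k x hx
    obtain ⟨I, hI, hx⟩ := (hmemK k x).1 hx
    rw [Finset.mem_powersetCard] at hI
    obtain ⟨i, hi⟩ := Finset.card_pos.1 (by omega : 0 < I.card)
    exact (hx i hi).1
  have hKcl : ∀ k, IsClosed (K k) := by
    intro k
    apply Set.Finite.isClosed_biUnion (Finset.finite_toSet pc)
    intro I _
    apply isClosed_biInter
    intro i _
    exact (contOn_orbit_sigmaSet σ i).preimage_isClosed_of_isClosed
      (isClosed_sigmaSet σ) Metric.isClosed_cthickening
  by_cases hne : ∀ k, (K k).Nonempty
  · exfalso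
    -- directedness
    have hanti : ∀ {k l : ℕ}, k ≤ l → K l ⊆ K k := by
      intro k l hkl x hx
      rw [hmemK] at hx ⊢
      obtain ⟨I, hI, hx⟩ := hx
      refine ⟨I, hI, fun i hi => ⟨(hx i hi).1, ?_⟩⟩
      refine Metric.cthickening_mono ?_ E (hx i hi).2
      have h1 : (0:ℝ) < k + 1 := by positivity
      have h2 : (0:ℝ) < l + 1 := by positivity
      rw [div_le_div_iff₀ h2 h1]
      have : (k : ℝ) ≤ l := by exact_mod_cast hkl
      linarith
    have hdir : Directed (· ⊇ ·) K := by
      intro k l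
      exact ⟨max k l, hanti (le_max_left _ _), hanti (le_max_right _ _)⟩
    obtain ⟨x, hx⟩ := IsCompact.nonempty_iInter_of_directed_nonempty_isCompact_isClosed
      K hdir hne (fun k => (hKcl k).isCompact) hKcl
    have hxA : x ∈ SigmaSet σ := hKsub 0 (by exact mem_iInter.1 hx 0)
    -- choose index sets
    have hsel : ∀ k : ℕ, ∃ I ∈ pc, ∀ i ∈ I,
        orbitIter σ x i ∈ Metric.cthickening (1 / (k + 1)) E := by
      intro k
      obtain ⟨I, hI, hx'⟩ := (hmemK k x).1 (mem_iInter.1 hx k)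
      exact ⟨I, hI, fun i hi => (hx' i hi).2⟩
    choose Isel hIsel1 hIsel2 using hsel
    have : ∃ I₀ : {I // I ∈ pc}, (Set.range fun k => (⟨Isel k, hIsel1 k⟩ : {I // I ∈ pc})).Infinite ∨ True := ⟨⟨Isel 0, hIsel1 0⟩, Or.inr trivial⟩
    -- pigeonhole: some I₀ occurs infinitely often
    obtain ⟨I₀, hI₀⟩ := Finite.exists_infinite_fiber
      (fun k : ℕ => (⟨Isel k, hIsel1 k⟩ : {I // I ∈ pc}))
    have hfib : {k : ℕ | Isel k = I₀.1}.Infinite := by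
      have := Set.infinite_coe_iff.1 hI₀
      refine this.mono ?_ |>.mono (by rfl)
      intro k hk
      simp only [mem_preimage, mem_singleton_iff] at hk
      simpa [Set.mem_setOf_eq] using congrArg Subtype.val hk
    -- each i ∈ I₀ visits E
    have hIE : ∀ i ∈ I₀.1, orbitIter σ x i ∈ E := by
      intro i hi
      have hle : ∀ k₀ : ℕ, EMetric.infEdist (orbitIter σ x i) E ≤ ENNReal.ofReal (1 / (k₀ + 1)) := by
        intro k₀
        obtain ⟨k, hk, hk₀⟩ := hfib.exists_gt k₀
        have hmem := hIsel2 k i (by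
          have hIk : Isel k = I₀.1 := hk
          rw [hIk]; exact hi)
        have h1 : orbitIter σ x i ∈ Metric.cthickening (1 / (k₀ + 1)) E := by
          refine Metric.cthickening_mono ?_ E hmem
          have h1 : (0:ℝ) < k₀ + 1 := by positivity
          have h2 : (0:ℝ) < k + 1 := by positivity
          rw [div_le_div_iff₀ h2 h1]
          have : (k₀ : ℝ) ≤ k := by exact_mod_cast hk₀.le
          linarith
        rwa [Metric.mem_cthickening_iff] at h1
      have h0 : EMetric.infEdist (orbitIter σ x i) E = 0 := by
        by_contra hne0
        have hpos : 0 < EMetric.infEdist (orbitIter σ x i) E := pos_iff_ne_zero.2 hne0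
        rcases eq_or_ne (EMetric.infEdist (orbitIter σ x i) E) ⊤ with htop | htop
        · have := hle 0
          rw [htop] at this
          exact absurd this (by simp [ENNReal.ofReal_lt_top.ne])
        · have hr : 0 < (EMetric.infEdist (orbitIter σ x i) E).toReal :=
            ENNReal.toReal_pos hne0 htop
          obtain ⟨k₀, hk₀⟩ := exists_nat_one_div_lt hr
          have := hle k₀
          have hlt : ENNReal.ofReal (1 / (k₀ + 1)) < EMetric.infEdist (orbitIter σ x i) E := by
            rw [← ENNReal.ofReal_toReal htop]
            exact ENNReal.ofReal_lt_ofReal_iff_of_nonneg (by positivity) |>.2 (by exact_mod_cast hk₀)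
          exact absurd this hlt.not_ge
      have : orbitIter σ x i ∈ closure E := EMetric.mem_closure_iff_infEdist_zero.2 h0
      rwa [hE.closure_eq] at this
    have : c + 1 ≤ cnt σ E n x := by
      rw [cnt_ge_iff]
      exact ⟨I₀.1, I₀.2, hIE⟩
    have := h x hxA
    omega
  · push_neg at hne
    obtain ⟨k, hk⟩ := hne
    refine ⟨1 / (k + 1), by positivity, ?_⟩
    intro x hx
    by_contra hc
    push_neg at hc
    have hxK : x ∈ K k := by
      refine (hmemK k x).2 ?_
      obtain ⟨I, hI, hIF⟩ :=
        (cnt_ge_iff σ (Metric.cthickening (1 / (k + 1)) E) n c x).1 (by omega)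
      exact ⟨I, hI, fun i hi => ⟨hx, hIF i hi⟩⟩
    rw [hk] at hxK
    exact hxK

end Counting


section Functions
variable {m : ℕ}

lemma min'_congr' {β : Type*} [LinearOrder β] {s t : Finset β} (h : s = t) (hs : s.Nonempty) :
    s.min' hs = t.min' (h ▸ hs) := by subst h; rfl

lemma exists_fam (hm : 0 < m) (Vf : Fin m → Set X)
    (hVo : ∀ j, IsOpen (Vf j)) (hVc : ∀ y : X, ∃ j, y ∈ Vf j)
    {W₀ W : Set X} (hW₀o : IsOpen W₀) (hWo : IsOpen W)
    (hEW₀ : (⋃ j, frontier (Vf j)) ⊆ W₀) (hW₀W : closure W₀ ⊆ W) :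
    ∃ fam : (Fin m ⊕ Fin m) → X → ℝ, ∃ J : (Fin m ⊕ Fin m) → Fin m,
      (∀ f, Continuous (fam f)) ∧
      (∀ f y, fam f y ∈ Icc (0:ℝ) 1) ∧
      (∀ f z, fam f z ≠ 0 → z ∈ Vf (J f)) ∧
      (∀ y, ∃ f, fam f y = 1) ∧
      (∀ f y, y ∉ W → fam f y = 0 ∨ fam f y = 1) := by
  classical
  set E : Set X := ⋃ j, frontier (Vf j) with hE
  -- the selection function
  have hSne : ∀ y : X, (Finset.univ.filter (fun j => y ∈ Vf j)).Nonempty := by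
    intro y
    obtain ⟨j, hj⟩ := hVc y
    exact ⟨j, Finset.mem_filter.2 ⟨Finset.mem_univ _, hj⟩⟩
  set hfun : X → Fin m := fun y => (Finset.univ.filter (fun j => y ∈ Vf j)).min' (hSne y)
    with hhfun
  have hmem : ∀ y, y ∈ Vf (hfun y) := by
    intro y
    have := Finset.min'_mem _ (hSne y)
    exact (Finset.mem_filter.1 this).2
  have hpat : ∀ y z : X, (∀ j, z ∈ Vf j ↔ y ∈ Vf j) → hfun z = hfun y := by
    intro y z h
    have heq : Finset.univ.filter (fun j => z ∈ Vf j)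
        = Finset.univ.filter (fun j => y ∈ Vf j) := by
      apply Finset.filter_congr
      intro j _
      simp [h j]
    simp only [hhfun]
    exact min'_congr' heq (hSne z)
  have hloc : ∀ y, y ∉ E → ∃ O, IsOpen O ∧ y ∈ O ∧ ∀ z ∈ O, hfun z = hfun y := by
    intro y hy
    have hyf : ∀ j, y ∉ frontier (Vf j) := by
      intro j hj
      exact hy (mem_iUnion.2 ⟨j, hj⟩)
    refine ⟨⋂ j, (if y ∈ Vf j then Vf j else (closure (Vf j))ᶜ), ?_, ?_, ?_⟩
    · apply isOpen_iInter_of_finite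
      intro j
      split
      · exact hVo j
      · exact isClosed_closure.isOpen_compl
    · refine mem_iInter.2 fun j => ?_
      split
      · assumption
      · rename_i hyj
        intro hcl
        exact hyf j ⟨hcl, by rwa [(hVo j).interior_eq]⟩
    · intro z hz
      apply hpat
      intro j
      have hzj := mem_iInter.1 hz j
      constructor
      · intro hzVf
        by_contra hyVf
        rw [if_neg hyVf] at hzj
        exact hzj (subset_closure hzVf)
      · intro hyVf
        rwa [if_pos hyVf] at hzj
  set L : Fin m → Set X := fun j => {y | hfun y = j} with hL
  have hclL : ∀ j y, y ∈ closure (L j) → y ∉ W₀ → hfun y = j := by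
    intro j y hcl hyW
    have hyE : y ∉ E := fun h => hyW (hEW₀ h)
    obtain ⟨O, hOo, hyO, hOl⟩ := hloc y hyE
    obtain ⟨z, hzO, hzL⟩ := mem_closure_iff.1 hcl O hOo hyO
    rw [← hOl z hzO]
    exact hzL
  have hclL2 : ∀ j y, y ∈ closure (⋃ k, ⋃ (_ : k ≠ j), L k) → y ∉ W₀ → hfun y ≠ j := by
    intro j y hcl hyW
    have hyE : y ∉ E := fun h => hyW (hEW₀ h)
    obtain ⟨O, hOo, hyO, hOl⟩ := hloc y hyE
    obtain ⟨z, hzO, hzL⟩ := mem_closure_iff.1 hcl O hOo hyO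
    obtain ⟨k, hk⟩ := mem_iUnion.1 hzL
    obtain ⟨hkj, hzLk⟩ := mem_iUnion.1 hk
    rw [← hOl z hzO]
    rw [show hfun z = k from hzLk]
    exact hkj
  -- shrinking
  obtain ⟨v, hvc, hvo, hvcl⟩ := exists_subset_iUnion_closure_subset isClosed_univ hVo
    (fun x _ => Set.toFinite _) (by
      intro y _
      obtain ⟨j, hj⟩ := hVc y
      exact mem_iUnion.2 ⟨j, hj⟩)
  set C : Fin m → Set X := fun j => closure (v j) with hC
  have hCc : ∀ y : X, ∃ j, y ∈ C j := by
    intro y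
    obtain ⟨j, hj⟩ := mem_iUnion.1 (hvc (mem_univ y))
    exact ⟨j, subset_closure hj⟩
  have hCV : ∀ j, C j ⊆ Vf j := hvcl
  -- Urysohn functions
  have hφex : ∀ j : Fin m, ∃ f : C(X, ℝ),
      (Set.EqOn f 0 ((closure (⋃ k, ⋃ (_ : k ≠ j), L k) ∩ W₀ᶜ) ∪ (Vf j)ᶜ)) ∧
      (Set.EqOn f 1 (closure (L j) ∩ W₀ᶜ)) ∧ ∀ x, f x ∈ Icc (0:ℝ) 1 := by
    intro j
    apply exists_continuous_zero_one_of_isClosed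
    · exact (isClosed_closure.inter (hW₀o.isClosed_compl)).union (hVo j).isClosed_compl
    · exact isClosed_closure.inter hW₀o.isClosed_compl
    · rw [Set.disjoint_left]
      rintro y (⟨hy1, hy2⟩ | hy1) ⟨hz1, hz2⟩
      · exact hclL2 j y hy1 hy2 (hclL j y hz1 hz2)
      · exact hy1 (by rw [← hclL j y hz1 hz2]; exact hmem y)
  choose φ hφ0 hφ1 hφIcc using hφex
  have hψex : ∀ j : Fin m, ∃ f : C(X, ℝ),
      (Set.EqOn f 0 (Vf j)ᶜ) ∧ (Set.EqOn f 1 (C j)) ∧ ∀ x, f x ∈ Icc (0:ℝ) 1 := by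
    intro j
    apply exists_continuous_zero_one_of_isClosed (hVo j).isClosed_compl isClosed_closure
    rw [Set.disjoint_left]
    intro y hy1 hy2
    exact hy1 (hCV j hy2)
  choose ψ hψ0 hψ1 hψIcc using hψex
  obtain ⟨χ, hχ0, hχ1, hχIcc⟩ : ∃ f : C(X, ℝ),
      (Set.EqOn f 0 Wᶜ) ∧ (Set.EqOn f 1 (closure W₀)) ∧ ∀ x, f x ∈ Icc (0:ℝ) 1 := by
    apply exists_continuous_zero_one_of_isClosed hWo.isClosed_compl isClosed_closure
    rw [Set.disjoint_left]
    intro y hy1 hy2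
    exact hy1 (hW₀W hy2)
  refine ⟨Sum.elim (fun j y => φ j y) (fun j y => ψ j y * χ y), Sum.elim id id,
    ?_, ?_, ?_, ?_, ?_⟩
  · rintro (j | j)
    · exact (φ j).continuous
    · exact ((ψ j).continuous).mul χ.continuous
  · rintro (j | j) y
    · exact hφIcc j y
    · constructor
      · exact mul_nonneg (hψIcc j y).1 (hχIcc y).1
      · exact mul_le_one₀ (hψIcc j y).2 (hχIcc y).1 (hχIcc y).2
  · rintro (j | j) z hz
    · simp only [Sum.elim_inl] at hz
      by_contra hzV
      exact hz (hφ0 j (Or.inr hzV))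
    · simp only [Sum.elim_inr] at hz
      by_contra hzV
      exact hz (by rw [hψ0 j hzV]; simp)
  · intro y
    by_cases hy : y ∈ W₀
    · obtain ⟨j, hj⟩ := hCc y
      refine ⟨Sum.inr j, ?_⟩
      simp only [Sum.elim_inr]
      rw [hψ1 j hj, hχ1 (subset_closure hy)]
      norm_num
    · refine ⟨Sum.inl (hfun y), ?_⟩
      simp only [Sum.elim_inl]
      exact hφ1 (hfun y) ⟨subset_closure rfl, hy⟩
  · rintro (j | j) y hyW
    · simp only [Sum.elim_inl]
      have hyW₀ : y ∉ W₀ := fun h => hyW (hW₀W (subset_closure h))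
      by_cases hj : hfun y = j
      · right
        exact hφ1 j ⟨subset_closure hj, hyW₀⟩
      · left
        refine hφ0 j (Or.inl ⟨?_, hyW₀⟩)
        exact subset_closure (mem_iUnion.2 ⟨hfun y, mem_iUnion.2 ⟨hj, rfl⟩⟩)
    · simp only [Sum.elim_inr]
      left
      rw [hχ0 hyW]
      simp

end Functions


section Beta
variable [CompactSpace X]

open Classical in
lemma card_filter_fin_eq (N : ℕ) (P : ℕ → Prop) :
    ((Finset.univ.filter (fun i : Fin N => P i.val)).card : ℕ)
      = ((Finset.range N).filter P).card := by
  classical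
  apply Finset.card_bij (fun i _ => i.val)
  · intro i hi
    simp only [Finset.mem_filter, Finset.mem_range]
    exact ⟨i.isLt, (Finset.mem_filter.1 hi).2⟩
  · intro i hi j hj hij
    exact Fin.val_injective hij
  · intro i hi
    simp only [Finset.mem_filter, Finset.mem_range] at hi
    exact ⟨⟨i, hi.1⟩, Finset.mem_filter.2 ⟨Finset.mem_univ _, hi.2⟩, rfl⟩

lemma coverD_le_of_cnt (σ : ℕ → IFSMap X)
    {m : ℕ} (hm : 0 < m) (Vf : Fin m → Set X)
    (hVo : ∀ j, IsOpen (Vf j)) (hVc : ∀ y : X, ∃ j, y ∈ Vf j)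
    {α : Set (Set X)} (hVU : ∀ j, ∃ U ∈ α, Vf j ⊆ U)
    {U₀ : Set X} (hU₀ : U₀ ∈ α)
    (n c : ℕ)
    (hcnt : ∀ x ∈ SigmaSet σ, cnt σ (⋃ j, frontier (Vf j)) (n + 1) x ≤ c) :
    coverD (SigmaSet σ) (coverUpTo σ α n) ≤ (((m + m) * c : ℕ) : ℕ∞) := by
  classical
  set A := SigmaSet σ with hA
  set E : Set X := ⋃ j, frontier (Vf j) with hE
  have hEcl : IsClosed E := isClosed_iUnion_of_finite fun j => isClosed_frontier
  obtain ⟨δ, hδ, hδcnt⟩ := exists_thickening_cnt_le σ hEcl (n + 1) c hcnt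
  set W : Set X := Metric.thickening δ E with hW
  set W₀ : Set X := Metric.thickening (δ / 2) E with hW₀
  have hWcnt : ∀ x ∈ A, cnt σ W (n + 1) x ≤ c := fun x hx =>
    le_trans (cnt_mono σ (Metric.thickening_subset_cthickening δ E) _ _) (hδcnt x hx)
  have hEW₀ : E ⊆ W₀ := Metric.self_subset_thickening (by positivity) E
  have hW₀W : closure W₀ ⊆ W := by
    refine (Metric.closure_thickening_subset_cthickening _ _).trans ?_
    exact Metric.cthickening_subset_thickening' hδ (by linarith) E
  obtain ⟨fam, J, hcont, hIcc, hsupp, hone, hbin⟩ :=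
    exists_fam hm Vf hVo hVc Metric.isOpen_thickening Metric.isOpen_thickening hEW₀ hW₀W
  set FF : X → (Fin (n + 1) × (Fin m ⊕ Fin m)) → ℝ :=
    fun x s => fam s.2 (orbitIter σ x s.1) with hFF
  have hFFcont : ContinuousOn FF A := by
    rw [continuousOn_pi]
    intro s
    exact (hcont s.2).comp_continuousOn (contOn_orbit_sigmaSet σ s.1)
  set Bv : ((Fin (n + 1) × (Fin m ⊕ Fin m)) → Bool) → (Fin (n + 1) × (Fin m ⊕ Fin m)) → ℝ :=
    fun v s => if v s then 1 else 0 with hBv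
  set Ov : ((Fin (n + 1) × (Fin m ⊕ Fin m)) → Bool) → Set ((Fin (n + 1) × (Fin m ⊕ Fin m)) → ℝ) :=
    fun v => {t | (∀ s, |t s - Bv v s| < 1) ∧
      ∀ s s', |(t s - Bv v s) - (t s' - Bv v s')| < 1} with hOv
  have hOopen : ∀ v, IsOpen (Ov v) := by
    intro v
    have : Ov v = (⋂ s, {t : (Fin (n + 1) × (Fin m ⊕ Fin m)) → ℝ | |t s - Bv v s| < 1}) ∩
        (⋂ s, ⋂ s', {t : (Fin (n + 1) × (Fin m ⊕ Fin m)) → ℝ |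
          |(t s - Bv v s) - (t s' - Bv v s')| < 1}) := by
      ext t
      simp only [hOv, mem_setOf_eq, mem_inter_iff, mem_iInter]
      try tauto
    rw [this]
    apply IsOpen.inter
    · apply isOpen_iInter_of_finite
      intro s
      exact isOpen_lt (((continuous_apply s).sub continuous_const).abs) continuous_const
    · apply isOpen_iInter_of_finite
      intro s
      apply isOpen_iInter_of_finite
      intro s'
      exact isOpen_lt ((((continuous_apply s).sub continuous_const).sub
        ((continuous_apply s').sub continuous_const)).abs) continuous_const
  set elt : ((Fin (n + 1) × (Fin m ⊕ Fin m)) → Bool) → Set X :=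
    fun v => A ∩ FF ⁻¹' (Ov v) with helt
  set β : Set (Set X) := elt '' univ with hβ
  -- the cover property
  have hcover : IsOpenCoverOn A β := by
    refine ⟨Set.finite_univ.image _, ?_, ?_⟩
    · rintro U ⟨v, -, rfl⟩
      obtain ⟨u, huo, hue⟩ := (continuousOn_iff'.1 hFFcont) (Ov v) (hOopen v)
      refine ⟨u, huo, ?_⟩
      rw [← hue]
      ext x
      simp only [helt, mem_inter_iff, mem_preimage]
      tauto
    · intro x hx
      set v : (Fin (n + 1) × (Fin m ⊕ Fin m)) → Bool :=
        fun s => if 1 / 2 < FF x s then true else false with hv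
      have hkey : ∀ s, -(1/2 : ℝ) < FF x s - Bv v s ∧ FF x s - Bv v s ≤ 1/2 := by
        intro s
        have h0 := (hIcc s.2 (orbitIter σ x s.1)).1
        have h1 := (hIcc s.2 (orbitIter σ x s.1)).2
        have h0' : (0:ℝ) ≤ FF x s := h0
        have h1' : FF x s ≤ 1 := h1
        by_cases hs : 1 / 2 < FF x s
        · have hvs : v s = true := by simp only [hv]; exact if_pos hs
          have hb : Bv v s = 1 := by simp [hBv, hvs]
          rw [hb]
          constructor <;> linarith
        · have hvs : v s = false := by simp only [hv]; exact if_neg hs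
          have hb : Bv v s = 0 := by simp [hBv, hvs]
          rw [hb]
          push_neg at hs
          constructor <;> linarith
      refine ⟨elt v, ⟨v, mem_univ v, rfl⟩, hx, ?_, ?_⟩
      · intro s
        have := hkey s
        rw [abs_lt]
        constructor <;> linarith [this.1, this.2]
      · intro s s'
        have h1 := hkey s
        have h2 := hkey s'
        rw [abs_lt]
        constructor <;> linarith [h1.1, h1.2, h2.1, h2.2]
  -- refinement
  choose Uof hUofα hUofsub using hVU
  have hrefines : Refines β (coverUpTo σ α n) := by
    rintro U ⟨v, -, rfl⟩
    by_cases hne : (elt v).Nonempty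
    · obtain ⟨x', hx'⟩ := hne
      choose fsel hfsel using fun k : ℕ => hone (orbitIter σ x' k)
      have hvtrue : ∀ k : Fin (n + 1), v (k, fsel k.val) = true := by
        intro k
        have h1 := hx'.2.1 (k, fsel k.val)
        by_contra hf
        rw [Bool.not_eq_true] at hf
        have : Bv v (k, fsel k.val) = 0 := by simp [hBv, hf]
        rw [this, hFF] at h1
        simp only at h1
        rw [hfsel k.val] at h1
        norm_num at h1
      set Usel : ℕ → Set X := fun k => Uof (J (fsel k)) with hUsel
      refine ⟨interUpTo σ Usel n, interUpTo_mem_coverUpTo σ (fun k => hUofα _) n, ?_⟩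
      intro x hx
      apply mem_interUpTo
      intro k hk
      refine ⟨fun j _ => hx.1 j, ?_⟩
      have hs := hx.2.1 (⟨k, by omega⟩, fsel k)
      have hvt := hvtrue ⟨k, by omega⟩
      simp only at hvt
      have hBv1 : Bv v (⟨k, by omega⟩, fsel k) = 1 := by simp [hBv, hvt]
      rw [hBv1, hFF] at hs
      simp only at hs
      have hne0 : fam (fsel k) (orbitIter σ x k) ≠ 0 := by
        intro h0
        rw [h0] at hs
        norm_num at hs
      exact hUofsub _ (hsupp _ _ hne0)
    · rw [not_nonempty_iff_eq_empty] at hne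
      rw [hne]
      exact ⟨interUpTo σ (fun _ => U₀) n, interUpTo_mem_coverUpTo σ (fun _ => hU₀) n,
        empty_subset _⟩
  -- order bound
  have hord : ∀ x ∈ A, ({U ∈ β | x ∈ U}).encard ≤ (((m + m) * c + 1 : ℕ) : ℕ∞) := by
    intro x hx
    set Vset : Set ((Fin (n + 1) × (Fin m ⊕ Fin m)) → Bool) := {v | x ∈ elt v} with hVset
    have hsub1 : {U ∈ β | x ∈ U} ⊆ elt '' Vset := by
      rintro U ⟨⟨v, -, rfl⟩, hxU⟩
      exact ⟨v, hxU, rfl⟩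
    set Fr : Finset (Fin (n + 1) × (Fin m ⊕ Fin m)) :=
      Finset.univ.filter (fun s => FF x s ≠ 0 ∧ FF x s ≠ 1) with hFr
    have hFrcard : Fr.card ≤ (m + m) * c := by
      have hsub : Fr ⊆ (Finset.univ.filter (fun i : Fin (n + 1) => orbitIter σ x i ∈ W)) ×ˢ
          (Finset.univ : Finset (Fin m ⊕ Fin m)) := by
        intro s hs
        rw [Finset.mem_filter] at hs
        rw [Finset.mem_product, Finset.mem_filter]
        refine ⟨⟨Finset.mem_univ _, ?_⟩, Finset.mem_univ _⟩
        by_contra hW'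
        rcases hbin s.2 (orbitIter σ x s.1) hW' with h | h
        · exact hs.2.1 h
        · exact hs.2.2 h
      calc Fr.card ≤ _ := Finset.card_le_card hsub
        _ = (Finset.univ.filter (fun i : Fin (n + 1) => orbitIter σ x i ∈ W)).card *
            (m + m) := by
          rw [Finset.card_product, Finset.card_univ]
          simp [Fintype.card_sum]
        _ ≤ c * (m + m) := by
          apply Nat.mul_le_mul_right
          rw [card_filter_fin_eq (n + 1) (fun i => orbitIter σ x i ∈ W)]
          exact hWcnt x hx
        _ = (m + m) * c := Nat.mul_comm _ _
    have hVenc : Vset.encard ≤ ((Fr.card + 1 : ℕ) : ℕ∞) := by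
      set g : ((Fin (n + 1) × (Fin m ⊕ Fin m)) → Bool) → ℕ :=
        fun v => ∑ s ∈ Fr, (if v s then 1 else 0) with hg
      have hinj : Set.InjOn g Vset := by
        intro v hv v' hv' hgeq
        have hkey0 : ∀ s, s ∉ Fr → v s = v' s := by
          intro s hs
          rw [hFr, Finset.mem_filter] at hs
          push_neg at hs
          have h01 : FF x s = 0 ∨ FF x s = 1 := by
            by_cases h : FF x s = 0
            · exact Or.inl h
            · exact Or.inr (hs (Finset.mem_univ _) h)
          have hb : ∀ w : (Fin (n + 1) × (Fin m ⊕ Fin m)) → Bool, x ∈ elt w →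
              (FF x s = 0 → w s = false) ∧ (FF x s = 1 → w s = true) := by
            intro w hw
            have habs := hw.2.1 s
            constructor
            · intro h0
              by_contra hb
              rw [Bool.not_eq_false] at hb
              have hb1 : Bv w s = 1 := by simp [hBv, hb]
              rw [hb1, h0] at habs
              norm_num at habs
            · intro h1
              by_contra hb
              rw [Bool.not_eq_true] at hb
              have hBw : Bv w s = 0 := by simp [hBv, hb]
              rw [h1, hBw] at habs
              norm_num at habs
          rcases h01 with h | h
          · rw [(hb v hv).1 h, (hb v' hv').1 h]
          · rw [(hb v hv).2 h, (hb v' hv').2 h]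
        have hnomix : (∀ s, v' s = true → v s = true) ∨ (∀ s, v s = true → v' s = true) := by
          by_contra hcon
          push_neg at hcon
          obtain ⟨⟨s, hv's, hvs⟩, ⟨s', hvs', hv's'⟩⟩ := hcon
          have hvsf : v s = false := Bool.eq_false_iff.mpr hvs
          have hv'sf : v' s' = false := Bool.eq_false_iff.mpr hv's'
          have c1 := hv.2.2 s s'
          have c2 := hv'.2.2 s s'
          have e1 : Bv v s = 0 := by simp [hBv, hvsf]
          have e2 : Bv v s' = 1 := by simp [hBv, hvs']
          have e3 : Bv v' s = 1 := by simp [hBv, hv's]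
          have e4 : Bv v' s' = 0 := by simp [hBv, hv'sf]
          rw [e1, e2, abs_lt] at c1
          rw [e3, e4, abs_lt] at c2
          obtain ⟨c1a, c1b⟩ := c1
          obtain ⟨c2a, c2b⟩ := c2
          linarith
        have hptwise : ∀ s ∈ Fr, (if v s then 1 else 0 : ℕ) = (if v' s then 1 else 0) := by
          rcases hnomix with h | h
          · have hle : ∀ s ∈ Fr, (if v' s then 1 else 0 : ℕ) ≤ (if v s then 1 else 0) := by
              intro s _
              by_cases hs : v' s = true
              · rw [hs, h s hs]
              · rw [Bool.not_eq_true] at hs; rw [hs]; simp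
            intro s hs
            exact ((Finset.sum_eq_sum_iff_of_le hle).1 hgeq.symm s hs).symm
          · have hle : ∀ s ∈ Fr, (if v s then 1 else 0 : ℕ) ≤ (if v' s then 1 else 0) := by
              intro s _
              by_cases hs : v s = true
              · rw [hs, h s hs]
              · rw [Bool.not_eq_true] at hs; rw [hs]; simp
            exact (Finset.sum_eq_sum_iff_of_le hle).1 hgeq
        funext s
        by_cases hs : s ∈ Fr
        · have := hptwise s hs
          by_cases h1 : v s = true <;> by_cases h2 : v' s = true <;>
            simp [h1, h2] at this ⊢ <;> try rfl
          all_goals (rw [Bool.not_eq_true] at *; simp_all)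
        · exact hkey0 s hs
      have himg : g '' Vset ⊆ ↑(Finset.range (Fr.card + 1)) := by
        rintro y ⟨v, -, rfl⟩
        simp only [Finset.coe_range, mem_Iio, Nat.lt_succ_iff]
        calc g v ≤ ∑ _s ∈ Fr, 1 := Finset.sum_le_sum (fun s _ => by split <;> omega)
          _ = Fr.card := by simp
      calc Vset.encard = (g '' Vset).encard := (hinj.encard_image).symm
        _ ≤ (↑(Finset.range (Fr.card + 1)) : Set ℕ).encard := Set.encard_le_encard himg
        _ = ((Fr.card + 1 : ℕ) : ℕ∞) := by
          rw [Set.encard_coe_eq_coe_finsetCard, Finset.card_range]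
    calc ({U ∈ β | x ∈ U}).encard ≤ (elt '' Vset).encard := Set.encard_le_encard hsub1
      _ ≤ Vset.encard := Set.encard_image_le _ _
      _ ≤ ((Fr.card + 1 : ℕ) : ℕ∞) := hVenc
      _ ≤ (((m + m) * c + 1 : ℕ) : ℕ∞) := by
        exact_mod_cast Nat.add_le_add_right hFrcard 1
  have hordOn : ordOn A β ≤ (((m + m) * c : ℕ) : ℕ∞) := by
    rw [ordOn, tsub_le_iff_right]
    refine iSup₂_le fun x hx => ?_
    calc ({U ∈ β | x ∈ U}).encard ≤ (((m + m) * c + 1 : ℕ) : ℕ∞) := hord x hx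
      _ = (((m + m) * c : ℕ) : ℕ∞) + 1 := by push_cast; ring
  calc coverD A (coverUpTo σ α n) ≤ ordOn A β :=
      iInf_le_of_le β (iInf_le _ ⟨hcover, hrefines⟩)
    _ ≤ _ := hordOn

end Beta

section Main
variable [CompactSpace X]

lemma le_capa {𝔙 : Set (IFSMap X)} (σ : ℕ → IFSMap X) (hσ : SeqIn 𝔙 σ) {x : X}
    (hx : WellDef σ x) (n : ℕ) (F : Set X) :
    ((cnt σ F n x : ℕ) : ℝ≥0∞) / ((n : ℕ) : ℝ≥0∞) ≤ capa 𝔙 n x F := by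
  have h1 : (({i : ℕ | i < n ∧ orbitIter σ x i ∈ F}.encard : ℝ≥0∞)) / ((n : ℝ≥0∞))
      ≤ capa 𝔙 n x F := le_iSup₂_of_le σ ⟨hσ, hx⟩ le_rfl
  have h2 : ({i : ℕ | i < n ∧ orbitIter σ x i ∈ F}.encard : ℝ≥0∞)
      = ((cnt σ F n x : ℕ) : ℝ≥0∞) := by
    rw [encard_eq_cnt]
    exact_mod_cast rfl
  rw [h2] at h1
  exact_mod_cast h1

theorem mdimCover_eq_zero {𝔙 : Set (IFSMap X)} [Nonempty X]
    (hSBP : SmallBoundary 𝔙) (σ : ℕ → IFSMap X) (hσ : SeqIn 𝔙 σ)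
    {α : Set (Set X)} (hα : IsOpenCoverOn (Set.univ : Set X) α) : mdimCover σ α = 0 := by
  classical
  have hαopen : ∀ U ∈ α, IsOpen U := by
    intro U hU
    obtain ⟨V', hV', hUV⟩ := hα.2.1 U hU
    have : U = V' := by simpa [inter_univ] using hUV
    rw [this]; exact hV'
  have hsel : ∀ x : X, ∃ V : Set X, IsOpen V ∧ x ∈ V ∧ (∃ U ∈ α, V ⊆ U) ∧
      ocap 𝔙 (frontier V) = 0 := by
    intro x
    obtain ⟨U, hUα, hxU⟩ := hα.2.2 (mem_univ x)
    obtain ⟨V, h1, h2, h3, h4⟩ := hSBP x U (hαopen U hUα) hxU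
    exact ⟨V, h1, h2, ⟨U, hUα, h3⟩, h4⟩
  choose V hVo hxV hVU hVsm using hsel
  obtain ⟨t, ht⟩ := isCompact_univ.elim_finite_subcover V hVo
    (fun x _ => mem_iUnion.2 ⟨x, hxV x⟩)
  have htne : t.Nonempty := by
    obtain ⟨x₀⟩ := ‹Nonempty X›
    obtain ⟨x, hx, hmem⟩ := mem_iUnion₂.1 (ht (mem_univ x₀))
    exact ⟨x, hx⟩
  set m := t.card with hmdef
  have hm : 0 < m := Finset.card_pos.2 htne
  set Vf : Fin m → Set X := fun i => V ((t.equivFin.symm i : ↥t) : X) with hVf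
  have hVfo : ∀ j, IsOpen (Vf j) := fun j => hVo _
  have hVfc : ∀ y : X, ∃ j, y ∈ Vf j := by
    intro y
    obtain ⟨x, hxt, hyx⟩ := mem_iUnion₂.1 (ht (mem_univ y))
    refine ⟨t.equivFin ⟨x, hxt⟩, ?_⟩
    simp only [hVf, Equiv.symm_apply_apply]
    exact hyx
  have hVfU : ∀ j, ∃ U ∈ α, Vf j ⊆ U := fun j => hVU _
  have hVfsm : ∀ j, ocap 𝔙 (frontier (Vf j)) = 0 := fun j => hVsm _
  obtain ⟨U₀, hU₀⟩ : ∃ U₀, U₀ ∈ α := by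
    obtain ⟨U, hU, _⟩ := hα.2.2 (mem_univ (Classical.arbitrary X))
    exact ⟨U, hU⟩
  set E : Set X := ⋃ j, frontier (Vf j) with hE
  have key : ∀ k : ℕ, 0 < k → mdimCover σ α ≤ ((k : ℝ≥0∞))⁻¹ := by
    intro k hk
    set q := 2 * m * m * k with hq
    have hq0 : 0 < q := by positivity
    have hqE0 : ((q : ℕ) : ℝ≥0∞) ≠ 0 := by exact_mod_cast hq0.ne'
    have hqEt : ((q : ℕ) : ℝ≥0∞) ≠ ⊤ := ENNReal.natCast_ne_top q
    have hev : ∀ j : Fin m, ∀ᶠ n in atTop,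
        (⨆ x : X, capa 𝔙 n x (frontier (Vf j))) < ((q : ℕ) : ℝ≥0∞)⁻¹ := by
      intro j
      have h := hVfsm j
      rw [ocap] at h
      refine eventually_lt_of_limsup_lt ?_
      rw [h]
      exact ENNReal.inv_pos.2 hqEt
    have hev2 : ∀ᶠ n in atTop, ∀ j : Fin m,
        (⨆ x : X, capa 𝔙 n x (frontier (Vf j))) < ((q : ℕ) : ℝ≥0∞)⁻¹ :=
      eventually_all.2 hev
    obtain ⟨N, hN⟩ := eventually_atTop.1 hev2
    rw [mdimCover]
    refine limsup_le_of_le (by isBoundedDefault) ?_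
    refine eventually_atTop.2 ⟨N, fun n hn => ?_⟩
    -- counting bounds at length n+1
    have hcard : ∀ j : Fin m, ∀ x ∈ SigmaSet σ,
        cnt σ (frontier (Vf j)) (n + 1) x * q < n + 1 := by
      intro j x hx
      have h1 := hN (n + 1) (by omega) j
      have h2 : capa 𝔙 (n + 1) x (frontier (Vf j)) < ((q : ℕ) : ℝ≥0∞)⁻¹ :=
        lt_of_le_of_lt (le_iSup (fun y => capa 𝔙 (n + 1) y (frontier (Vf j))) x) h1
      have h3 : ((cnt σ (frontier (Vf j)) (n + 1) x : ℕ) : ℝ≥0∞) /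
          (((n + 1 : ℕ)) : ℝ≥0∞) < ((q : ℕ) : ℝ≥0∞)⁻¹ :=
        lt_of_le_of_lt (le_capa σ hσ hx (n + 1) (frontier (Vf j))) h2
      have hb0 : (((n + 1 : ℕ)) : ℝ≥0∞) ≠ 0 := by exact_mod_cast (Nat.succ_ne_zero n)
      have hbt : (((n + 1 : ℕ)) : ℝ≥0∞) ≠ ⊤ := ENNReal.natCast_ne_top _
      rw [ENNReal.div_lt_iff (Or.inl hb0) (Or.inl hbt)] at h3
      have h4 : ((cnt σ (frontier (Vf j)) (n + 1) x : ℕ) : ℝ≥0∞) <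
          (((n + 1 : ℕ)) : ℝ≥0∞) / ((q : ℕ) : ℝ≥0∞) := by
        rw [ENNReal.div_eq_inv_mul]
        exact h3
      rw [ENNReal.lt_div_iff_mul_lt (Or.inl hqE0) (Or.inl hqEt)] at h4
      exact_mod_cast h4
    set c := (m * (n + 1)) / q with hc
    have hcntE : ∀ x ∈ SigmaSet σ, cnt σ E (n + 1) x ≤ c := by
      intro x hx
      rw [hc, Nat.le_div_iff_mul_le hq0]
      have hsum : cnt σ E (n + 1) x ≤ ∑ j : Fin m, cnt σ (frontier (Vf j)) (n + 1) x := by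
        have hsub : (Finset.range (n + 1)).filter (fun i => orbitIter σ x i ∈ E) ⊆
            Finset.univ.biUnion (fun j : Fin m =>
              (Finset.range (n + 1)).filter (fun i => orbitIter σ x i ∈ frontier (Vf j))) := by
          intro i hi
          rw [Finset.mem_filter] at hi
          obtain ⟨j, hj⟩ := mem_iUnion.1 hi.2
          exact Finset.mem_biUnion.2 ⟨j, Finset.mem_univ _,
            Finset.mem_filter.2 ⟨hi.1, hj⟩⟩
        calc cnt σ E (n + 1) x ≤ (Finset.univ.biUnion (fun j : Fin m =>
              (Finset.range (n + 1)).filter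
                (fun i => orbitIter σ x i ∈ frontier (Vf j)))).card :=
            Finset.card_le_card hsub
          _ ≤ ∑ j : Fin m, cnt σ (frontier (Vf j)) (n + 1) x := Finset.card_biUnion_le
      calc cnt σ E (n + 1) x * q ≤
          (∑ j : Fin m, cnt σ (frontier (Vf j)) (n + 1) x) * q :=
            Nat.mul_le_mul_right _ hsum
        _ = ∑ j : Fin m, cnt σ (frontier (Vf j)) (n + 1) x * q := by rw [Finset.sum_mul]
        _ ≤ ∑ _j : Fin m, (n + 1) :=
            Finset.sum_le_sum fun j _ => (hcard j x hx).le
        _ = m * (n + 1) := by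
          rw [Finset.sum_const, Finset.card_univ, Fintype.card_fin, smul_eq_mul]
    have hbound := coverD_le_of_cnt σ hm Vf hVfo hVfc hVfU hU₀ n c hcntE
    -- conclude
    have hNat : ((m + m) * c) * k ≤ n + 1 := by
      have h1 : c * q ≤ m * (n + 1) := by
        rw [hc]
        exact Nat.div_mul_le_self _ _
      have h2 : m * (((m + m) * c) * k) = c * q := by rw [hq]; ring
      have h3 : m * (((m + m) * c) * k) ≤ m * (n + 1) := by rw [h2]; exact h1
      exact Nat.le_of_mul_le_mul_left h3 hm
    have hb0 : ((n : ℝ≥0∞) + 1) ≠ 0 := by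
      simp
    have hbt : ((n : ℝ≥0∞) + 1) ≠ ⊤ := by
      have : ((n : ℝ≥0∞) + 1) = (((n + 1 : ℕ)) : ℝ≥0∞) := by push_cast; ring
      rw [this]
      exact ENNReal.natCast_ne_top _
    have hkE0 : ((k : ℕ) : ℝ≥0∞) ≠ 0 := by exact_mod_cast hk.ne'
    have hkEt : ((k : ℕ) : ℝ≥0∞) ≠ ⊤ := ENNReal.natCast_ne_top k
    calc ((coverD (SigmaSet σ) (coverUpTo σ α n) : ℝ≥0∞)) / ((n : ℝ≥0∞) + 1)
        ≤ ((((m + m) * c : ℕ)) : ℝ≥0∞) / ((n : ℝ≥0∞) + 1) := by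
          apply ENNReal.div_le_div_right
          have := (ENat.toENNReal_le).2 hbound
          calc (coverD (SigmaSet σ) (coverUpTo σ α n) : ℝ≥0∞) ≤
              (((((m + m) * c : ℕ) : ℕ∞)) : ℝ≥0∞) := this
            _ = ((((m + m) * c : ℕ)) : ℝ≥0∞) := ENat.toENNReal_coe _
      _ ≤ ((k : ℕ) : ℝ≥0∞)⁻¹ := by
          rw [ENNReal.div_le_iff hb0 hbt]
          have hrw : (((k : ℕ) : ℝ≥0∞))⁻¹ * ((n : ℝ≥0∞) + 1)
              = ((n : ℝ≥0∞) + 1) / ((k : ℕ) : ℝ≥0∞) := by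
            rw [ENNReal.div_eq_inv_mul]
          rw [hrw, ENNReal.le_div_iff_mul_le (Or.inl hkE0) (Or.inl hkEt)]
          have : ((n : ℝ≥0∞) + 1) = (((n + 1 : ℕ)) : ℝ≥0∞) := by push_cast; ring
          rw [this]
          exact_mod_cast hNat
  by_contra hne
  obtain ⟨k, hk⟩ := ENNReal.exists_inv_nat_lt hne
  have hk0 : 0 < k := by
    rcases Nat.eq_zero_or_pos k with rfl | h
    · rw [Nat.cast_zero, ENNReal.inv_zero] at hk
      exact absurd hk not_top_lt
    · exact h
  exact absurd hk (not_lt.2 (key k hk0))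

end Main

end IFSAux



open IFS in
/-- **Theorem B.** An iterated function system with the small boundary property has
zero mean dimension. -/
theorem mdim_eq_zero_of_smallBoundary {X : Type*} [MetricSpace X] [CompactSpace X]
    (𝔙 : Set (IFSMap X)) (hIFS : IsIFS 𝔙) (hSBP : SmallBoundary 𝔙) :
    mdim 𝔙 = 0 := by
  have hX : Nonempty X := by
    obtain ⟨O, hne, -⟩ := hIFS
    obtain ⟨y, -⟩ := hne
    exact ⟨y⟩
  apply le_antisymm _ zero_le
  rw [mdim]
  refine iSup_le fun σ => iSup_le fun hσ => ?_
  rw [mdimAlong]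
  refine iSup_le fun α => iSup_le fun hα => ?_
  exact le_of_eq (IFSAux.mdimCover_eq_zero hSBP σ hσ hα)
end

section
/- Let (X,𝔙) be an iterated function system and v ∈ 𝔙. If for some n ∈ ℕ the n-fold composition v^n belongs to 𝔙, then mdim(X,𝔙,σ_{v^n}) = n·mdim(X,𝔙,σ_v), where σ_w denotes the constant sequence (w,w,w,…) for w ∈ 𝔙. -/
open Filter Topology Set
open scoped ENat ENNReal

namespace IFS

variable {X : Type*} [MetricSpace X]

/-- Composition of two partial maps of an IFS: `(v.comp w)(x) = v(w(x))` on the natural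
domain `D(w) ∩ w^{-1}(D(v))`. -/
def IFSMap.comp (v w : IFSMap X) : IFSMap X where
  dom := w.dom ∩ w.toFun ⁻¹' v.dom
  toFun := v.toFun ∘ w.toFun
  closed_dom := w.contOn.preimage_isClosed_of_isClosed w.closed_dom v.closed_dom
  injOn := fun a ha b hb hab => w.injOn ha.1 hb.1 (v.injOn ha.2 hb.2 hab)
  contOn := v.contOn.comp (w.contOn.mono Set.inter_subset_left) (fun _ hx => hx.2)

/-- `IFSMap.pow v n` is the `n`-fold composition `v^n` (with `v^0` the identity). -/
def IFSMap.pow (v : IFSMap X) : ℕ → IFSMap X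
  | 0 => ⟨Set.univ, id, isClosed_univ, Set.injOn_id _, continuousOn_id⟩
  | n + 1 => IFSMap.comp v (IFSMap.pow v n)

end IFS


namespace IFS

variable {X : Type*} [MetricSpace X]


lemma orbitIter_const (w : IFSMap X) (x : X) :
    ∀ k, orbitIter (fun _ => w) x k = w.toFun^[k] x
  | 0 => rfl
  | k + 1 => by
      rw [orbitIter, orbitIter_const w x k]; exact (Function.iterate_succ_apply' _ _ _).symm

lemma pow_toFun (v : IFSMap X) : ∀ n, (IFSMap.pow v n).toFun = v.toFun^[n]
  | 0 => rfl
  | n + 1 => by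
      show v.toFun ∘ (IFSMap.pow v n).toFun = _
      rw [pow_toFun v n, ← Function.iterate_succ']

lemma mem_pow_dom (v : IFSMap X) :
    ∀ n (x : X), x ∈ (IFSMap.pow v n).dom ↔ ∀ k < n, v.toFun^[k] x ∈ v.dom
  | 0, x => by simp [IFSMap.pow]
  | n + 1, x => by
      constructor
      · rintro ⟨h1, h2⟩ k hk
        rcases Nat.lt_succ_iff_lt_or_eq.mp hk with h | rfl
        · exact (mem_pow_dom v n x).mp h1 k h
        · simpa [pow_toFun] using h2
      · intro h
        exact ⟨(mem_pow_dom v n x).mpr fun k hk => h k (hk.trans (Nat.lt_succ_self n)),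
          by simpa [pow_toFun] using h n (Nat.lt_succ_self n)⟩

lemma definedUpTo_const (v : IFSMap X) (k : ℕ) (x : X) :
    DefinedUpTo (fun _ => v) k x ↔ ∀ j < k, v.toFun^[j] x ∈ v.dom := by
  unfold DefinedUpTo; simp [orbitIter_const]

lemma definedUpTo_pow (v : IFSMap X) (n j : ℕ) (hn : 1 ≤ n) (x : X) :
    DefinedUpTo (fun _ => IFSMap.pow v n) j x ↔ DefinedUpTo (fun _ => v) (n * j) x := by
  have hn0 : 0 < n := hn
  simp only [definedUpTo_const, DefinedUpTo, orbitIter_const, mem_pow_dom, pow_toFun,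
    ← Function.iterate_mul, ← Function.iterate_add_apply]
  constructor
  · intro h l hl
    have hi : l / n < j := Nat.div_lt_iff_lt_mul hn0 |>.mpr (by
      calc l < n * j := hl
      _ = j * n := Nat.mul_comm _ _)
    have := h (l / n) hi (l % n) (Nat.mod_lt _ hn0)
    rwa [Nat.mod_add_div l n] at this
  · intro h i hi k hk
    exact h (k + n * i) (by
      have : k + n * i < n + n * i := by omega
      calc k + n * i < n + n * i := this
      _ = n * (i + 1) := by ring
      _ ≤ n * j := Nat.mul_le_mul_left n hi)

lemma wellDef_const (v : IFSMap X) (x : X) :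
    WellDef (fun _ => v) x ↔ ∀ m, v.toFun^[m] x ∈ v.dom := by
  unfold WellDef; simp [orbitIter_const]

lemma sigmaSet_pow (v : IFSMap X) (n : ℕ) (hn : 1 ≤ n) :
    SigmaSet (fun _ => IFSMap.pow v n) = SigmaSet (fun _ => v) := by
  ext x
  simp only [SigmaSet, mem_setOf_eq, wellDef_const, mem_pow_dom, pow_toFun,
    ← Function.iterate_mul, ← Function.iterate_add_apply]
  constructor
  · intro h m
    have := h (m / n) (m % n) (Nat.mod_lt _ hn)
    rwa [Nat.mod_add_div m n] at this
  · intro h j k _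
    exact h (k + n * j)

lemma preimageN_pow (v : IFSMap X) (n j : ℕ) (hn : 1 ≤ n) (U : Set X) :
    preimageN (fun _ => IFSMap.pow v n) j U = preimageN (fun _ => v) (n * j) U := by
  ext x
  simp [preimageN, definedUpTo_pow v n j hn, orbitIter_const, pow_toFun,
    ← Function.iterate_mul]


lemma coverD_mono {A : Set X} {γ δ : Set (Set X)} (h : Refines γ δ) :
    coverD A δ ≤ coverD A γ := by
  refine le_iInf fun β => le_iInf fun hβ => iInf_le_of_le β (iInf_le_of_le ?_ le_rfl)
  exact ⟨hβ.1, fun U hU => by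
    obtain ⟨V, hV, hUV⟩ := hβ.2 U hU
    obtain ⟨W, hW, hVW⟩ := h V hV
    exact ⟨W, hW, hUV.trans hVW⟩⟩

lemma biInter_range_succ (f : ℕ → Set X) (m : ℕ) :
    ⋂ j ∈ Finset.range (m + 1 + 1), f j = (⋂ j ∈ Finset.range (m + 1), f j) ∩ f (m + 1) := by
  rw [Finset.range_add_one, Finset.set_biInter_insert, Set.inter_comm]

lemma mem_coverUpTo (σ : ℕ → IFSMap X) (α : Set (Set X)) :
    ∀ m (W : Set X), W ∈ coverUpTo σ α m ↔
      ∃ u : ℕ → Set X, (∀ j, u j ∈ α) ∧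
        W = ⋂ j ∈ Finset.range (m + 1), preimageN σ j (u j)
  | 0, W => by
      simp only [coverUpTo, coverPull, Set.mem_image]
      constructor
      · rintro ⟨U, hU, rfl⟩
        exact ⟨fun _ => U, fun _ => hU, by simp⟩
      · rintro ⟨u, hu, rfl⟩
        exact ⟨u 0, hu 0, by simp⟩
  | m + 1, W => by
      simp only [coverUpTo, coverJoin, Set.mem_image2]
      constructor
      · rintro ⟨a, ha, b, hb, rfl⟩
        obtain ⟨u, hu, rfl⟩ := (mem_coverUpTo σ α m a).mp ha
        obtain ⟨U, hU, rfl⟩ := (Set.mem_image _ _ _).mp hb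
        refine ⟨Function.update u (m + 1) U, fun j => ?_, ?_⟩
        · rcases eq_or_ne j (m + 1) with rfl | hj
          · simpa using hU
          · simpa [Function.update_of_ne hj] using hu j
        · rw [biInter_range_succ, Function.update_self]
          congr 1
          refine Set.iInter₂_congr fun j hj => ?_
          rw [Function.update_of_ne (by simp at hj; omega : j ≠ m + 1)]
      · rintro ⟨u, hu, rfl⟩
        exact ⟨⋂ j ∈ Finset.range (m + 1), preimageN σ j (u j),
          (mem_coverUpTo σ α m _).mpr ⟨u, hu, rfl⟩,
          preimageN σ (m + 1) (u (m + 1)), ⟨u (m + 1), hu (m + 1), rfl⟩,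
          (biInter_range_succ _ m).symm⟩

lemma refines_coverUpTo_of_le (σ : ℕ → IFSMap X) (α : Set (Set X)) {m m' : ℕ} (h : m ≤ m') :
    Refines (coverUpTo σ α m') (coverUpTo σ α m) := by
  intro W hW
  obtain ⟨u, hu, rfl⟩ := (mem_coverUpTo σ α m' W).mp hW
  refine ⟨⋂ j ∈ Finset.range (m + 1), preimageN σ j (u j),
    (mem_coverUpTo σ α m _).mpr ⟨u, hu, rfl⟩, ?_⟩
  intro x hx
  simp only [Set.mem_iInter, Finset.mem_range] at hx ⊢
  exact fun j hj => hx j (by omega)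

lemma refines_B (v : IFSMap X) {n : ℕ} (hn : 1 ≤ n) (α : Set (Set X)) (m : ℕ) :
    Refines (coverUpTo (fun _ => v) α (n * m)) (coverUpTo (fun _ => IFSMap.pow v n) α m) := by
  intro W hW
  obtain ⟨u, hu, rfl⟩ := (mem_coverUpTo _ α (n * m) W).mp hW
  refine ⟨⋂ j ∈ Finset.range (m + 1), preimageN (fun _ => IFSMap.pow v n) j (u (n * j)),
    (mem_coverUpTo _ α m _).mpr ⟨fun j => u (n * j), fun j => hu (n * j), rfl⟩, ?_⟩
  intro x hx
  simp only [Set.mem_iInter, Finset.mem_range] at hx ⊢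
  intro j hj
  rw [preimageN_pow v n j hn]
  exact hx (n * j) (by nlinarith)


lemma orbitIter_pow (v : IFSMap X) (n : ℕ) (x : X) (j : ℕ) :
    orbitIter (fun _ => IFSMap.pow v n) x j = v.toFun^[n * j] x := by
  rw [orbitIter_const, pow_toFun, ← Function.iterate_mul]

lemma definedUpTo_mono {σ : ℕ → IFSMap X} {k k' : ℕ} {x : X}
    (h : DefinedUpTo σ k' x) (hk : k ≤ k') : DefinedUpTo σ k x :=
  fun j hj => h j (lt_of_lt_of_le hj hk)

lemma exists_beta (v : IFSMap X) {n : ℕ} (hn : 1 ≤ n) (α : Set (Set X))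
    (hα : IsOpenCoverOn (Set.univ : Set X) α) :
    ∃ β : Set (Set X), IsOpenCoverOn (Set.univ : Set X) β ∧
      ∀ m, Refines (coverUpTo (fun _ => IFSMap.pow v n) β (m + 1))
        (coverUpTo (fun _ => v) α (n * m + n - 1)) := by
  classical
  set D := (IFSMap.pow v n).dom with hD
  have hopen : ∀ U ∈ α, IsOpen U := by
    intro U hU
    obtain ⟨V, hV, e⟩ := hα.2.1 U hU
    simp only [Set.inter_univ] at e
    exact e ▸ hV
  have hcont : ∀ k : ℕ, k ≤ n → ContinuousOn (v.toFun^[k]) D := by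
    intro k hk
    have h1 : ContinuousOn (v.toFun^[k]) (IFSMap.pow v k).dom := by
      have h2 := (IFSMap.pow v k).contOn
      rwa [pow_toFun] at h2
    refine h1.mono fun x hx => ?_
    rw [hD, mem_pow_dom] at hx
    rw [mem_pow_dom]
    exact fun j hj => hx j (lt_of_lt_of_le hj hk)
  have hV' : ∀ t : Fin n → Set X, ∃ V : Set X, IsOpen V ∧
      ((∀ k, IsOpen (t k)) → V ∩ D = {x ∈ D | ∀ k : Fin n, v.toFun^[k] x ∈ t k}) := by
    intro t
    by_cases ht : ∀ k, IsOpen (t k)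
    · have hW : ∀ k : Fin n, ∃ W : Set X, IsOpen W ∧
          v.toFun^[(k : ℕ)] ⁻¹' (t k) ∩ D = W ∩ D := by
        intro k
        exact continuousOn_iff'.mp (hcont k (le_of_lt k.2)) (t k) (ht k)
      choose W hWo hWe using hW
      refine ⟨⋂ k : Fin n, W k, isOpen_iInter_of_finite hWo, fun _ => Set.ext fun x => ?_⟩
      constructor
      · rintro ⟨hx1, hxD⟩
        refine ⟨hxD, fun k => ?_⟩
        have hWk : x ∈ W k ∩ D := ⟨Set.mem_iInter.mp hx1 k, hxD⟩
        rw [← hWe k] at hWk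
        exact hWk.1
      · rintro ⟨hxD, hk⟩
        refine ⟨Set.mem_iInter.mpr fun k => ?_, hxD⟩
        have hWk : x ∈ v.toFun^[(k : ℕ)] ⁻¹' (t k) ∩ D := ⟨hk k, hxD⟩
        rw [hWe k] at hWk
        exact hWk.1
    · exact ⟨∅, isOpen_empty, fun h => absurd h ht⟩
  choose Vt hVo hVe using hV'
  set T : Set (Fin n → Set X) := {t | ∀ k, t k ∈ α} with hT
  have hTfin : T.Finite := by
    have : T ⊆ Set.pi Set.univ (fun _ => α) := fun t ht k _ => ht k
    exact (Set.Finite.pi (fun _ => hα.1)).subset this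
  refine ⟨(fun t => Vt t ∪ Dᶜ) '' T, ⟨hTfin.image _, ?_, ?_⟩, ?_⟩
  · rintro U ⟨t, _, rfl⟩
    exact ⟨Vt t ∪ Dᶜ, (hVo t).union (IFSMap.pow v n).closed_dom.isOpen_compl, rfl⟩
  · intro x _
    by_cases hxD : x ∈ D
    · have : ∀ k : Fin n, ∃ U ∈ α, v.toFun^[(k : ℕ)] x ∈ U := by
        intro k
        obtain ⟨U, hU, hxU⟩ := hα.2.2 (Set.mem_univ (v.toFun^[(k : ℕ)] x))
        exact ⟨U, hU, hxU⟩
      choose t ht1 ht2 using this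
      refine ⟨Vt t ∪ Dᶜ, ⟨t, ht1, rfl⟩, Or.inl ?_⟩
      have := hVe t (fun k => hopen _ (ht1 k))
      have hx : x ∈ Vt t ∩ D := by rw [this]; exact ⟨hxD, ht2⟩
      exact hx.1
    · obtain ⟨U, hU, _⟩ := hα.2.2 (Set.mem_univ x)
      exact ⟨Vt (fun _ => U) ∪ Dᶜ, ⟨fun _ => U, fun _ => hU, rfl⟩, Or.inr hxD⟩
  · intro m W hW
    obtain ⟨u, hu, rfl⟩ := (mem_coverUpTo _ _ (m + 1) W).mp hW
    choose t htT hteq using hu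
    set Ul : ℕ → Set X := fun l => t (l / n) ⟨l % n, Nat.mod_lt _ hn⟩ with hUl
    refine ⟨⋂ l ∈ Finset.range (n * m + n - 1 + 1), preimageN (fun _ => v) l (Ul l),
      (mem_coverUpTo _ α _ _).mpr ⟨Ul, fun l => htT (l / n) _, rfl⟩, ?_⟩
    intro x hx
    simp only [Set.mem_iInter, Finset.mem_range] at hx ⊢
    have hnm : n * (m + 1) = n * m + n := by ring
    have hrange : n * m + n - 1 + 1 = n * (m + 1) := by omega
    have hdef : DefinedUpTo (fun _ => v) (n * (m + 1)) x := by
      have := (hx (m + 1) (by omega)).1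
      exact (definedUpTo_pow v n (m + 1) hn x).mp this
    have hdef' : ∀ l < n * (m + 1), v.toFun^[l] x ∈ v.dom :=
      (definedUpTo_const v _ x).mp hdef
    intro l hl
    have hl' : l < n * (m + 1) := by omega
    have hj : l / n < m + 1 := (Nat.div_lt_iff_lt_mul hn).mpr (by
      calc l < n * (m + 1) := hl'
      _ = (m + 1) * n := Nat.mul_comm _ _)
    -- v^[n*(l/n)] x ∈ D
    have hD2 : v.toFun^[n * (l / n)] x ∈ D := by
      rw [hD, mem_pow_dom]
      intro k hk
      rw [← Function.iterate_add_apply]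
      refine hdef' _ ?_
      have h3 : n * (l / n) + n ≤ n * (m + 1) := by
        have h4 : (l / n) + 1 ≤ m + 1 := hj
        calc n * (l / n) + n = n * (l / n + 1) := by ring
        _ ≤ n * (m + 1) := Nat.mul_le_mul_left n h4
      omega
    have hmem : v.toFun^[n * (l / n)] x ∈ Vt (t (l / n)) ∪ Dᶜ := by
      have h2 := (hx (l / n) (by omega)).2
      rw [orbitIter_pow] at h2
      rw [← hteq (l / n)] at h2
      exact h2
    have hmem2 : v.toFun^[n * (l / n)] x ∈ Vt (t (l / n)) ∩ D := by
      rcases hmem with h | h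
      · exact ⟨h, hD2⟩
      · exact absurd hD2 h
    rw [hVe _ (fun k => hopen _ (htT (l / n) k))] at hmem2
    have := hmem2.2 ⟨l % n, Nat.mod_lt _ hn⟩
    rw [← Function.iterate_add_apply, Nat.mod_add_div l n] at this
    exact ⟨definedUpTo_mono hdef (by omega), by rwa [orbitIter_const]⟩


lemma aux_div_le (a b : ℝ≥0∞) (hab : a ≤ b) (nn K M R : ℕ)
    (hK : K ≠ 0) (hM : M ≠ 0) (hle : nn * M ≤ R) :
    (nn : ℝ≥0∞) * (a / K) ≤ (b / M) * ((R : ℝ≥0∞) / K) := by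
  have hMne : (M : ℝ≥0∞) ≠ 0 := by exact_mod_cast hM
  have hMtop : (M : ℝ≥0∞) ≠ ⊤ := ENNReal.natCast_ne_top M
  calc (nn : ℝ≥0∞) * (a / K) ≤ (nn : ℝ≥0∞) * (b / K) :=
        mul_le_mul_right (ENNReal.div_le_div_right hab _) _
  _ = ((nn : ℝ≥0∞) * b) / K := (mul_div_assoc _ _ _).symm
  _ = ((nn : ℝ≥0∞) * b * M) / ((K : ℝ≥0∞) * M) :=
        (ENNReal.mul_div_mul_right _ _ hMne hMtop).symm
  _ ≤ (b * R) / ((M : ℝ≥0∞) * K) := by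
        rw [mul_comm (K : ℝ≥0∞) (M : ℝ≥0∞)]
        refine ENNReal.div_le_div ?_ le_rfl
        have e : (nn : ℝ≥0∞) * b * M = b * ((nn * M : ℕ) : ℝ≥0∞) := by push_cast; ring
        rw [e]
        exact mul_le_mul_right (by exact_mod_cast hle) b
  _ = (b / M) * ((R : ℝ≥0∞) / K) := by
        rw [div_eq_mul_inv, div_eq_mul_inv, div_eq_mul_inv,
          ENNReal.mul_inv (Or.inl hMne) (Or.inl hMtop)]
        ring

lemma aux_div_le2 (a b : ℝ≥0∞) (hab : a ≤ b) (n m : ℕ) (hn : 1 ≤ n) :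
    a / ((m : ℝ≥0∞) + 1) ≤ (n : ℝ≥0∞) * (b / (((n * m : ℕ) : ℝ≥0∞) + 1)) := by
  have hn0 : (n : ℝ≥0∞) ≠ 0 := by exact_mod_cast Nat.one_le_iff_ne_zero.mp hn
  have hntop : (n : ℝ≥0∞) ≠ ⊤ := ENNReal.natCast_ne_top n
  have e0 : ((m : ℝ≥0∞) + 1) = ((m + 1 : ℕ) : ℝ≥0∞) := by push_cast; ring
  have e1 : (((n * m : ℕ) : ℝ≥0∞) + 1) = ((n * m + 1 : ℕ) : ℝ≥0∞) := by push_cast; ring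
  rw [e0, e1, ← mul_div_assoc]
  calc a / ((m + 1 : ℕ) : ℝ≥0∞) ≤ b / ((m + 1 : ℕ) : ℝ≥0∞) :=
        ENNReal.div_le_div_right hab _
  _ = ((n : ℝ≥0∞) * b) / ((n : ℝ≥0∞) * ((m + 1 : ℕ) : ℝ≥0∞)) :=
        (ENNReal.mul_div_mul_left _ _ hn0 hntop).symm
  _ ≤ ((n : ℝ≥0∞) * b) / ((n * m + 1 : ℕ) : ℝ≥0∞) := by
        refine ENNReal.div_le_div_left ?_ _
        have : ((n * (m + 1) : ℕ) : ℝ≥0∞) = (n : ℝ≥0∞) * ((m + 1 : ℕ) : ℝ≥0∞) := by push_cast; ring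
        rw [← this]
        have h2 : n * m + 1 ≤ n * (m + 1) := by
          have : n * (m + 1) = n * m + n := by ring
          omega
        exact_mod_cast h2


lemma limsup_comp_le (g : ℕ → ℝ≥0∞) (s : ℕ → ℕ) (hs : Tendsto s atTop atTop) :
    limsup (fun k => g (s k)) atTop ≤ limsup g atTop := by
  rw [show (fun k => g (s k)) = g ∘ s from rfl, limsup_comp]
  exact limsup_le_limsup_of_le hs

lemma tendsto_c (n : ℕ) (hn : 1 ≤ n) :
    Tendsto (fun k : ℕ => ((k + 2 * n : ℕ) : ℝ≥0∞) / ((k : ℝ≥0∞) + 1)) atTop (𝓝 1) := by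
  have he : ∀ k : ℕ, ((k + 2 * n : ℕ) : ℝ≥0∞) / ((k : ℝ≥0∞) + 1)
      = 1 + ((2 * n - 1 : ℕ) : ℝ≥0∞) * (((k + 1 : ℕ) : ℝ≥0∞))⁻¹ := by
    intro k
    have e : (k + 2 * n : ℕ) = (k + 1) + (2 * n - 1) := by omega
    have e2 : ((k : ℝ≥0∞) + 1) = ((k + 1 : ℕ) : ℝ≥0∞) := by push_cast; ring
    rw [e, e2, Nat.cast_add, ENNReal.add_div,
      ENNReal.div_self (by exact_mod_cast Nat.succ_ne_zero k) (ENNReal.natCast_ne_top _),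
      div_eq_mul_inv]
  have h0 : Tendsto (fun k : ℕ => (((k + 1 : ℕ) : ℝ≥0∞))⁻¹) atTop (𝓝 0) :=
    ENNReal.tendsto_inv_nat_nhds_zero.comp (tendsto_add_atTop_nat 1)
  have h1 := ENNReal.Tendsto.const_mul (a := ((2 * n - 1 : ℕ) : ℝ≥0∞)) h0
    (Or.inr (ENNReal.natCast_ne_top _))
  have h2 := (tendsto_const_nhds (x := (1 : ℝ≥0∞)) (f := atTop)).add h1
  simp only [mul_zero, add_zero] at h2
  simpa only [← he] using h2

end IFS

open IFS in
/-- If `v ∈ 𝔙` and the `n`-fold composition `v^n` also belongs to `𝔙`, then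
`mdim(X,𝔙,σ_{v^n}) = n · mdim(X,𝔙,σ_v)`, where `σ_w = (w,w,w,…)`. -/
theorem mdimAlong_pow {X : Type*} [MetricSpace X] [CompactSpace X]
    (𝔙 : Set (IFSMap X)) (hIFS : IsIFS 𝔙) (v : IFSMap X) (hv : v ∈ 𝔙)
    (n : ℕ) (hn : 1 ≤ n) (hpow : IFSMap.pow v n ∈ 𝔙) :
    mdimAlong (fun _ : ℕ => IFSMap.pow v n) = (n : ℝ≥0∞) * mdimAlong (fun _ : ℕ => v) := by
  classical
  have hn0 : 0 < n := hn
  have hSig : SigmaSet (fun _ : ℕ => IFSMap.pow v n) = SigmaSet (fun _ : ℕ => v) :=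
    sigmaSet_pow v n hn
  apply le_antisymm
  · -- easy direction
    refine iSup₂_le fun α hα => ?_
    have htends : Tendsto (fun m : ℕ => n * m) atTop atTop := by
      refine tendsto_atTop_atTop.mpr fun b => ⟨b, fun k hk => ?_⟩
      have h1 : k ≤ n * k := Nat.le_mul_of_pos_left k hn0
      omega
    have hcov : mdimCover (fun _ : ℕ => IFSMap.pow v n) α
        ≤ (n : ℝ≥0∞) * mdimCover (fun _ : ℕ => v) α := by
      have key : ∀ m : ℕ,
          ((coverD (SigmaSet (fun _ : ℕ => IFSMap.pow v n))
            (coverUpTo (fun _ : ℕ => IFSMap.pow v n) α m) : ℝ≥0∞)) / ((m : ℝ≥0∞) + 1)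
          ≤ (n : ℝ≥0∞) * (((coverD (SigmaSet (fun _ : ℕ => v))
            (coverUpTo (fun _ : ℕ => v) α (n * m)) : ℝ≥0∞)) / (((n * m : ℕ) : ℝ≥0∞) + 1)) := by
        intro m
        refine aux_div_le2 _ _ ?_ n m hn
        refine ENat.toENNReal_mono ?_
        calc coverD (SigmaSet (fun _ : ℕ => IFSMap.pow v n))
              (coverUpTo (fun _ : ℕ => IFSMap.pow v n) α m)
            = coverD (SigmaSet (fun _ : ℕ => v))
              (coverUpTo (fun _ : ℕ => IFSMap.pow v n) α m) := by rw [hSig]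
        _ ≤ _ := coverD_mono (refines_B v hn α m)
      calc mdimCover (fun _ : ℕ => IFSMap.pow v n) α
          ≤ limsup (fun m : ℕ => (n : ℝ≥0∞) * (((coverD (SigmaSet (fun _ : ℕ => v))
              (coverUpTo (fun _ : ℕ => v) α (n * m)) : ℝ≥0∞)) / (((n * m : ℕ) : ℝ≥0∞) + 1)))
              atTop := limsup_le_limsup (Filter.Eventually.of_forall key)
      _ = (n : ℝ≥0∞) * limsup (fun m : ℕ => (((coverD (SigmaSet (fun _ : ℕ => v))
              (coverUpTo (fun _ : ℕ => v) α (n * m)) : ℝ≥0∞)) / (((n * m : ℕ) : ℝ≥0∞) + 1)))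
              atTop := ENNReal.limsup_const_mul_of_ne_top (ENNReal.natCast_ne_top n)
      _ ≤ (n : ℝ≥0∞) * mdimCover (fun _ : ℕ => v) α := by
            refine mul_le_mul_right ?_ _
            exact limsup_comp_le (fun k => (((coverD (SigmaSet (fun _ : ℕ => v))
              (coverUpTo (fun _ : ℕ => v) α k) : ℝ≥0∞)) / (((k : ℕ) : ℝ≥0∞) + 1)))
              (fun m => n * m) htends
    refine hcov.trans (mul_le_mul_right ?_ _)
    exact le_iSup₂ (f := fun γ (_ : IsOpenCoverOn (Set.univ : Set X) γ) =>
      mdimCover (fun _ : ℕ => v) γ) α hα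
  · -- hard direction
    rw [mdimAlong, ENNReal.mul_iSup]
    refine iSup_le fun α => ?_
    rw [ENNReal.mul_iSup]
    refine iSup_le fun hα => ?_
    obtain ⟨β, hβcov, hβref⟩ := exists_beta v hn α hα
    refine le_trans ?_ (le_iSup₂ (f := fun γ (_ : IsOpenCoverOn (Set.univ : Set X) γ) =>
      mdimCover (fun _ : ℕ => IFSMap.pow v n) γ) β hβcov)
    set G : ℕ → ℝ≥0∞ := fun m => ((coverD (SigmaSet (fun _ : ℕ => IFSMap.pow v n))
      (coverUpTo (fun _ : ℕ => IFSMap.pow v n) β m) : ℝ≥0∞)) / ((m : ℝ≥0∞) + 1) with hG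
    set g : ℕ → ℝ≥0∞ := fun k => ((coverD (SigmaSet (fun _ : ℕ => v))
      (coverUpTo (fun _ : ℕ => v) α k) : ℝ≥0∞)) / ((k : ℝ≥0∞) + 1) with hg
    set c : ℕ → ℝ≥0∞ := fun k => ((k + 2 * n : ℕ) : ℝ≥0∞) / ((k : ℝ≥0∞) + 1) with hc
    have hclim : Tendsto c atTop (𝓝 1) := tendsto_c n hn
    have hclimsup : limsup c atTop = 1 := hclim.limsup_eq
    have hs : Tendsto (fun k : ℕ => k / n + 1) atTop atTop := by
      refine tendsto_atTop_atTop.mpr fun b => ⟨n * b, fun k hk => ?_⟩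
      have h1 : b ≤ k / n := (Nat.le_div_iff_mul_le hn0).mpr
        (le_trans (le_of_eq (Nat.mul_comm b n)) hk)
      omega
    have point : ∀ k : ℕ, (n : ℝ≥0∞) * g k ≤ G (k / n + 1) * c k := by
      intro k
      have hdm : n * (k / n) + k % n = k := Nat.div_add_mod k n
      have hmod : k % n < n := Nat.mod_lt _ hn0
      have hkb : k ≤ n * (k / n) + n - 1 := by
        have h1 : k % n ≤ n - 1 := Nat.le_sub_one_of_lt hmod
        calc k = n * (k / n) + k % n := hdm.symm
        _ ≤ n * (k / n) + (n - 1) := Nat.add_le_add_left h1 _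
        _ = n * (k / n) + n - 1 := (Nat.add_sub_assoc hn _).symm
      have hab : ((coverD (SigmaSet (fun _ : ℕ => v)) (coverUpTo (fun _ : ℕ => v) α k) : ℝ≥0∞))
          ≤ ((coverD (SigmaSet (fun _ : ℕ => IFSMap.pow v n))
            (coverUpTo (fun _ : ℕ => IFSMap.pow v n) β (k / n + 1)) : ℝ≥0∞)) := by
        refine ENat.toENNReal_mono ?_
        calc coverD (SigmaSet (fun _ : ℕ => v)) (coverUpTo (fun _ : ℕ => v) α k)
            ≤ coverD (SigmaSet (fun _ : ℕ => v))
              (coverUpTo (fun _ : ℕ => v) α (n * (k / n) + n - 1)) :=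
              coverD_mono (refines_coverUpTo_of_le _ α hkb)
        _ ≤ coverD (SigmaSet (fun _ : ℕ => v))
              (coverUpTo (fun _ : ℕ => IFSMap.pow v n) β (k / n + 1)) :=
              coverD_mono (hβref (k / n))
        _ = _ := by rw [hSig]
      have haux := aux_div_le _ _ hab n (k + 1) (k / n + 2) (k + 2 * n)
        (Nat.succ_ne_zero k) (Nat.succ_ne_zero (k / n + 1)) (by
          obtain ⟨cc, hcc⟩ : ∃ cc, cc = n * (k / n) := ⟨_, rfl⟩
          have h3 : n * (k / n + 2) = cc + 2 * n := by rw [hcc]; ring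
          rw [← hcc] at hdm
          rw [h3]
          omega)
      have e1 : ((k + 1 : ℕ) : ℝ≥0∞) = (k : ℝ≥0∞) + 1 := by push_cast; ring
      have e2 : ((k / n + 2 : ℕ) : ℝ≥0∞) = ((k / n + 1 : ℕ) : ℝ≥0∞) + 1 := by push_cast; ring
      rw [e1, e2] at haux
      exact haux
    calc (n : ℝ≥0∞) * mdimCover (fun _ : ℕ => v) α
        = limsup (fun k : ℕ => (n : ℝ≥0∞) * g k) atTop := by
          rw [show mdimCover (fun _ : ℕ => v) α = limsup g atTop from rfl,
            ← ENNReal.limsup_const_mul_of_ne_top (ENNReal.natCast_ne_top n)]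
    _ ≤ limsup (fun k : ℕ => G (k / n + 1) * c k) atTop :=
          limsup_le_limsup (Filter.Eventually.of_forall point)
    _ ≤ limsup (fun k : ℕ => G (k / n + 1)) atTop * limsup c atTop :=
          ENNReal.limsup_mul_le' (u := fun k : ℕ => G (k / n + 1)) (v := c)
            (Or.inr (by rw [hclimsup]; exact ENNReal.one_ne_top))
            (Or.inr (by rw [hclimsup]; exact one_ne_zero))
    _ ≤ mdimCover (fun _ : ℕ => IFSMap.pow v n) β * 1 := by
          refine mul_le_mul' ?_ hclimsup.le
          exact limsup_comp_le G (fun k => k / n + 1) hs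
    _ = mdimCover (fun _ : ℕ => IFSMap.pow v n) β := mul_one _
end

section
/- Let (X,𝔙) be an iterated function system, σ ∈ Σ, and let α = {U_1,V_1}∨{U_2,V_2}∨…∨{U_r,V_r} be a finite open cover of X, where each {U_i,V_i} is an open cover of X. For 1 ≤ i ≤ r define w_i : Σ_σ → [0,1] by w_i(x) = d(x,X−V_i)/(d(x,X−V_i)+d(x,X−U_i)), so that U_i = w_i^{−1}([0,1)) and V_i = w_i^{−1}((0,1]). For N ∈ ℕ define F_σ(N,·) : Σ_σ → [0,1]^{rN} by letting the (jr+i)-th coordinate of F_σ(N,x) equal w_i(v^{σ(j)}(x)) for 0 ≤ j ≤ N−1 and 1 ≤ i ≤ r. If π : F_σ(N,Σ_σ) → [0,1]^{rN} is a continuous map such that for every ξ ∈ F_σ(N,Σ_σ), every a ∈ {0,1} and every coordinate 1 ≤ k ≤ rN, ξ_k = a implies π(ξ)_k = a, then the map π∘F_σ(N,·) : Σ_σ → [0,1]^{rN} is compatible with the cover α_0^{N−1}(σ) of Σ_σ. -/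
open Filter Topology Set
open scoped ENat ENNReal NNReal

namespace IFS

variable {X : Type*} [MetricSpace X]

/-- A map `f` (considered on `A ⊆ X`) is compatible with a cover `β` of `A` if some
open cover `γ` of `f(A)` pulls back to a cover refining `β`. -/
def CompatibleOn {Y : Type*} [TopologicalSpace Y] (A : Set X) (f : X → Y)
    (β : Set (Set X)) : Prop :=
  ∃ γ : Set (Set Y),
    (∀ W ∈ γ, ∃ W' : Set Y, IsOpen W' ∧ W ∩ f '' A = W' ∩ f '' A) ∧
    f '' A ⊆ ⋃₀ γ ∧
    ∀ W ∈ γ, ∃ V ∈ β, A ∩ f ⁻¹' W ⊆ V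

end IFS

open IFS in
private lemma aux_mem_coverUpTo {X : Type*} [MetricSpace X] (σ : ℕ → IFSMap X)
    (α : Set (Set X)) (A : ℕ → Set X) (hA : ∀ j, A j ∈ α) :
    ∀ n : ℕ, (⋂ j ∈ Finset.range (n + 1), preimageN σ j (A j)) ∈ coverUpTo σ α n := by
  intro n
  induction n with
  | zero =>
      have h : (⋂ j ∈ Finset.range 1, preimageN σ j (A j)) = preimageN σ 0 (A 0) := by
        simp
      rw [h]
      exact ⟨A 0, hA 0, rfl⟩
  | succ n ih =>
      have h : (⋂ j ∈ Finset.range (n + 2), preimageN σ j (A j)) =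
          (⋂ j ∈ Finset.range (n + 1), preimageN σ j (A j)) ∩
            preimageN σ (n + 1) (A (n + 1)) := by
        rw [Finset.range_add_one, Finset.set_biInter_insert, Set.inter_comm]
      rw [h]
      exact Set.mem_image2_of_mem ih (Set.mem_image_of_mem _ (hA (n + 1)))

open IFS in
/-- **Lemma 4.4.** Let `α = {U_1,V_1} ∨ ⋯ ∨ {U_r,V_r}` and let
`w_i(x) = d(x,X∖V_i)/(d(x,X∖V_i)+d(x,X∖U_i))`, `F_σ(N,x)_{(j,i)} = w_i(v^{σ(j)}(x))`.
If `π`, defined and continuous on `F_σ(N,Σ_σ)`, fixes the coordinates with values `0`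
and `1`, then `π ∘ F_σ(N,·)` is compatible with `α_0^{N-1}(σ)`. -/
theorem compatible_of_fixes_extreme_coords {X : Type*} [MetricSpace X] [CompactSpace X]
    (𝔙 : Set (IFSMap X)) (hIFS : IsIFS 𝔙) (σ : ℕ → IFSMap X) (hσ : SeqIn 𝔙 σ)
    (r : ℕ) (hr : 1 ≤ r) (U V : Fin r → Set X)
    (hUopen : ∀ i, IsOpen (U i)) (hVopen : ∀ i, IsOpen (V i))
    (hUV : ∀ i, U i ∪ V i = Set.univ)
    (α : Set (Set X))
    (hα : α = Set.range (fun c : Fin r → Bool => ⋂ i, if c i then U i else V i))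
    (w : Fin r → X → ℝ)
    (hw : ∀ i x, w i x =
      Metric.infDist x (V i)ᶜ / (Metric.infDist x (V i)ᶜ + Metric.infDist x (U i)ᶜ))
    (N : ℕ) (hN : 1 ≤ N)
    (F : X → (Fin N × Fin r → ℝ))
    (hF : ∀ x p, F x p = w p.2 (orbitIter σ x (p.1 : ℕ)))
    (π : (Fin N × Fin r → ℝ) → (Fin N × Fin r → ℝ))
    (hπcont : ContinuousOn π (F '' SigmaSet σ))
    (hπ : ∀ ξ ∈ F '' SigmaSet σ, ∀ p : Fin N × Fin r,
      (ξ p = 0 → π ξ p = 0) ∧ (ξ p = 1 → π ξ p = 1)) :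
    CompatibleOn (SigmaSet σ) (π ∘ F) (coverUpTo σ α (N - 1)) := by
  classical
  -- basic facts about `w`
  have hw0 : ∀ (i : Fin r) (y : X), y ∉ V i → w i y = 0 := by
    intro i y hy
    rw [hw, Metric.infDist_zero_of_mem (by simpa using hy), zero_div]
  have hw1 : ∀ (i : Fin r) (y : X), ((V i)ᶜ).Nonempty → y ∉ U i → w i y = 1 := by
    intro i y hne hy
    have hyV : y ∈ V i := by
      have h := (hUV i).symm ▸ Set.mem_univ y
      rcases h with h | h
      · exact absurd h hy
      · exact h
    have h1 : Metric.infDist y (U i)ᶜ = 0 :=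
      Metric.infDist_zero_of_mem (by simpa using hy)
    have h2 : 0 < Metric.infDist y (V i)ᶜ := by
      rw [← (hVopen i).isClosed_compl.notMem_iff_infDist_pos hne]
      simpa using hyV
    rw [hw, h1, add_zero, div_self h2.ne']
  refine ⟨Set.range (fun c : Fin N × Fin r → Bool =>
    {η : Fin N × Fin r → ℝ | ∀ p, if c p then η p ≠ 0 else η p ≠ 1}), ?_, ?_, ?_⟩
  · -- relative openness: the sets are in fact open
    rintro W ⟨c, rfl⟩
    refine ⟨_, ?_, rfl⟩
    show IsOpen {η : Fin N × Fin r → ℝ | ∀ p, if c p then η p ≠ 0 else η p ≠ 1}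
    have h : {η : Fin N × Fin r → ℝ | ∀ p, if c p then η p ≠ 0 else η p ≠ 1} =
        ⋂ p, {η : Fin N × Fin r → ℝ | if c p then η p ≠ 0 else η p ≠ 1} := by
      ext η; simp [Set.mem_iInter]
    rw [h]
    refine isOpen_iInter_of_finite fun p => ?_
    by_cases hc : c p <;> simp only [hc, if_true, if_false]
    · exact IsOpen.preimage (continuous_apply p) isOpen_compl_singleton
    · exact IsOpen.preimage (continuous_apply p) isOpen_compl_singleton
  · -- the sets cover everything
    rintro η -
    refine ⟨_, ⟨fun p => if η p = 0 then false else true, rfl⟩, fun p => ?_⟩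
    by_cases h : η p = 0 <;> simp [h]
  · -- refinement
    rintro W ⟨c, rfl⟩
    set d : ℕ → Fin r → Bool := fun j i =>
      if h : j < N then decide (c (⟨j, h⟩, i) = false ∧ ((V i)ᶜ).Nonempty) else false
      with hd
    set A : ℕ → Set X := fun j => ⋂ i, if d j i then U i else V i with hAdef
    have hAα : ∀ j, A j ∈ α := fun j => by
      rw [hα]; exact ⟨fun i => d j i, rfl⟩
    refine ⟨_, aux_mem_coverUpTo σ α A hAα (N - 1), ?_⟩
    have hN1 : N - 1 + 1 = N := Nat.succ_pred_eq_of_pos hN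
    rw [hN1]
    rintro x ⟨hx, hxW⟩
    simp only [Set.mem_preimage, Function.comp_apply, Set.mem_setOf_eq] at hxW
    refine Set.mem_iInter₂.2 fun j hj => ?_
    rw [Finset.mem_range] at hj
    refine ⟨fun k _ => hx k, Set.mem_iInter.2 fun i => ?_⟩
    have hFx : F x ∈ F '' SigmaSet σ := ⟨x, hx, rfl⟩
    have hπx := hπ (F x) hFx (⟨j, hj⟩, i)
    have hgW := hxW (⟨j, hj⟩, i)
    have hdval : d j i = decide (c (⟨j, hj⟩, i) = false ∧ ((V i)ᶜ).Nonempty) := by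
      rw [hd]; simp [hj]
    by_cases hdj : d j i = true
    · -- use `U i`
      rw [if_pos hdj]
      have hcond : c (⟨j, hj⟩, i) = false ∧ ((V i)ᶜ).Nonempty := by
        rw [hdval] at hdj; exact of_decide_eq_true hdj
      obtain ⟨hcf, hne⟩ := hcond
      rw [hcf] at hgW
      simp only [Bool.false_eq_true, if_false] at hgW
      by_contra hmem
      have hwone : w i (orbitIter σ x j) = 1 := hw1 i _ hne hmem
      have hFone : F x (⟨j, hj⟩, i) = 1 := by rw [hF]; exact hwone
      exact hgW (hπx.2 hFone)
    · -- use `V i`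
      have hdj' : d j i = false := by
        cases h' : d j i
        · rfl
        · exact absurd h' hdj
      rw [if_neg (by simp [hdj'])]
      by_cases hcf : c (⟨j, hj⟩, i) = true
      · rw [hcf] at hgW
        simp only [if_true] at hgW
        by_contra hmem
        have hwzero : w i (orbitIter σ x j) = 0 := hw0 i _ hmem
        have hFzero : F x (⟨j, hj⟩, i) = 0 := by rw [hF]; exact hwzero
        exact hgW (hπx.1 hFzero)
      · have hcf' : c (⟨j, hj⟩, i) = false := by
          cases h' : c (⟨j, hj⟩, i)
          · rfl
          · exact absurd h' hcf
        have hnc : ¬ (c (⟨j, hj⟩, i) = false ∧ ((V i)ᶜ).Nonempty) := by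
          intro hcond
          have : d j i = true := by rw [hdval]; exact decide_eq_true hcond
          exact hdj this
        have hVuniv : V i = Set.univ := by
          by_contra hV
          exact hnc ⟨hcf', Set.nonempty_compl.2 hV⟩
        rw [hVuniv]; exact Set.mem_univ _
end

section
/- Let (X,𝔙) be a uniformly almost periodic iterated function system. If σ ∈ Σ is uniformly continuous, then σ is equicontinuous. -/
open Filter Topology Set
open scoped ENat ENNReal NNReal

namespace IFS

variable {X : Type*} [MetricSpace X]

/-- A set of natural numbers is syndetic. -/
def Syndetic (A : Set ℕ) : Prop :=
  ∃ L : ℕ, 0 < L ∧ ∀ n : ℕ, ∃ k ∈ A, n ≤ k ∧ k < n + L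

/-- `R(ε) = ⋂_{x∈X} ⋂_{σ∈Σ_x} {n ∈ ℤ⁺ : d(v^{σ(n)}(x),x) < ε}`. -/
def Rset (𝔙 : Set (IFSMap X)) (ε : ℝ) : Set ℕ :=
  {n | ∀ x : X, ∀ σ : ℕ → IFSMap X, SeqIn 𝔙 σ → WellDef σ x →
    dist (orbitIter σ x n) x < ε}

/-- `(X,𝔙)` is uniformly almost periodic if `R(ε)` is syndetic for every `ε > 0`. -/
def UnifAlmostPeriodic (𝔙 : Set (IFSMap X)) : Prop :=
  ∀ ε : ℝ, 0 < ε → Syndetic (Rset 𝔙 ε)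

/-- `σ(+∞,n) = (v_{n+1}, v_{n+2}, …)`. -/
def shiftSeq (σ : ℕ → IFSMap X) (n : ℕ) : ℕ → IFSMap X := fun k => σ (k + n)

/-- `σ` is uniformly continuous: for each `k` and `ε > 0` there is `δ > 0` such that
for every `n`, every `1 ≤ j ≤ k` and all `x,y ∈ Σ_{σ(+∞,n)}` with `d(x,y) < δ`,
`d(v^{σ(n+j,n)}(x), v^{σ(n+j,n)}(y)) < ε`. -/
def UnifContinuousSeq (σ : ℕ → IFSMap X) : Prop :=
  ∀ k : ℕ, ∀ ε : ℝ, 0 < ε → ∃ δ : ℝ, 0 < δ ∧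
    ∀ n : ℕ, ∀ j : ℕ, 1 ≤ j → j ≤ k →
      ∀ x ∈ SigmaSet (shiftSeq σ n), ∀ y ∈ SigmaSet (shiftSeq σ n), dist x y < δ →
        dist (orbitIter (shiftSeq σ n) x j) (orbitIter (shiftSeq σ n) y j) < ε

/-- `σ` is equicontinuous. -/
def EquicontinuousSeq (σ : ℕ → IFSMap X) : Prop :=
  ∀ ε : ℝ, 0 < ε → ∃ δ : ℝ, 0 < δ ∧
    ∀ x ∈ SigmaSet σ, ∀ y ∈ SigmaSet σ, dist x y < δ →
      ∀ n : ℕ, dist (orbitIter σ x n) (orbitIter σ y n) < ε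

end IFS


namespace IFS

variable {X : Type*} [MetricSpace X]

lemma orbitIter_shift (σ : ℕ → IFSMap X) (x : X) (j : ℕ) :
    ∀ m : ℕ, orbitIter (shiftSeq σ j) (orbitIter σ x j) m = orbitIter σ x (j + m)
  | 0 => rfl
  | m + 1 => by
    show (σ (m + j)).toFun (orbitIter (shiftSeq σ j) (orbitIter σ x j) m)
        = orbitIter σ x (j + m + 1)
    rw [orbitIter_shift σ x j m]
    show (σ (m + j)).toFun (orbitIter σ x (j + m)) = (σ (j + m)).toFun (orbitIter σ x (j + m))
    rw [Nat.add_comm m j]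

lemma wellDef_shift {σ : ℕ → IFSMap X} {x : X} (h : WellDef σ x) (j : ℕ) :
    WellDef (shiftSeq σ j) (orbitIter σ x j) := by
  intro m
  rw [orbitIter_shift]
  show orbitIter σ x (j + m) ∈ (σ (m + j)).dom
  rw [Nat.add_comm m j]
  exact h (j + m)

end IFS

open IFS in
/-- If `(X,𝔙)` is a uniformly almost periodic IFS and `σ ∈ Σ` is uniformly
continuous, then `σ` is equicontinuous. -/
theorem equicontinuous_of_unifContinuous {X : Type*} [MetricSpace X] [CompactSpace X]
    (𝔙 : Set (IFSMap X)) (hIFS : IsIFS 𝔙) (hUAP : UnifAlmostPeriodic 𝔙)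
    (σ : ℕ → IFSMap X) (hσ : SeqIn 𝔙 σ) (hUC : UnifContinuousSeq σ) :
    EquicontinuousSeq σ := by
  intro ε hε
  have hε3 : 0 < ε / 3 := by linarith
  obtain ⟨L, hL, hsyn⟩ := hUAP (ε / 3) hε3
  obtain ⟨δ', hδ', hδspec⟩ := hUC L (ε / 3) hε3
  refine ⟨min δ' (ε / 3), lt_min hδ' hε3, ?_⟩
  intro x hx y hy hxy n
  have hx' : WellDef σ x := hx
  have hy' : WellDef σ y := hy
  obtain ⟨a, j, ha, hj, hn⟩ : ∃ a j : ℕ, a ∈ Rset 𝔙 (ε / 3) ∧ j ≤ L ∧ n = j + a := by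
    by_cases h : n ≤ L
    · refine ⟨0, n, ?_, h, rfl⟩
      intro z τ _ _
      simpa [orbitIter] using hε3
    · obtain ⟨k, hk, hk1, hk2⟩ := hsyn (n - L + 1)
      exact ⟨k, n - k, hk, by omega, by omega⟩
  have key : ∀ z : X, WellDef σ z →
      dist (orbitIter σ z n) (orbitIter σ z j) < ε / 3 := by
    intro z hz
    have h1 : SeqIn 𝔙 (shiftSeq σ j) := fun m => hσ (m + j)
    have h2 : WellDef (shiftSeq σ j) (orbitIter σ z j) := wellDef_shift hz j
    have := ha (orbitIter σ z j) (shiftSeq σ j) h1 h2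
    rwa [orbitIter_shift, ← hn] at this
  have mid : dist (orbitIter σ x j) (orbitIter σ y j) < ε / 3 := by
    rcases Nat.eq_zero_or_pos j with hj0 | hj1
    · subst hj0
      exact lt_of_lt_of_le hxy (min_le_right _ _)
    · have hs0 : shiftSeq σ 0 = σ := rfl
      have hxs : x ∈ SigmaSet (shiftSeq σ 0) := by rw [hs0]; exact hx
      have hys : y ∈ SigmaSet (shiftSeq σ 0) := by rw [hs0]; exact hy
      have := hδspec 0 j hj1 hj x hxs y hys (lt_of_lt_of_le hxy (min_le_left _ _))
      rwa [hs0] at this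
  calc dist (orbitIter σ x n) (orbitIter σ y n)
      ≤ dist (orbitIter σ x n) (orbitIter σ x j) + dist (orbitIter σ x j) (orbitIter σ y j)
        + dist (orbitIter σ y j) (orbitIter σ y n) := dist_triangle4 _ _ _ _
    _ < ε / 3 + ε / 3 + ε / 3 := by
        have h1 := key x hx'
        have h2 := key y hy'
        rw [dist_comm] at h2
        linarith [mid]
    _ = ε := by ring
end
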